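/- arXiv:1507.07191 — 8 statements merged into one kernel-verified Lean document; each statement's English description precedes it below -/
import Mathlib

section
/- Let X be an integrable real-valued random variable on a probability space, with nonatomic distribution, satisfying L ≤ X ≤ R almost surely, and set μ_a = E[X]. Let μ_b be a real number with μ_b < μ_a and P(X < μ_b) > 0, and let D_0 = {X < μ_b}. Then there exist an integer K ≥ 2 and real numbers μ_b = y_0 ≤ y_1 ≤ … ≤ y_{K-1} ≤ R such that, setting D_k = {y_{k-1} ≤ X < y_k} for 1 ≤ k ≤ K−1 and D_K = {X ≥ y_{K-1}}, one has P(D_k) > 0 for every 1 ≤ k ≤ K−1, E[X | D_0 ∪ D_k] = μ_b for every 1 ≤ k ≤ K−1, and E[X | D_0 ∪ D_K] ≤ μ_b. -/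
/-!
With `Φ t = ∫_{X < t} (X - μb)`, the target conditions are statements about increments of `Φ`:
`E[X | D₀ ∪ D_k] = μb` says `Φ(y_k) - Φ(y_{k-1}) = -Φ(μb) =: δ > 0`. Since `X` has no atoms, `Φ`
is continuous; it is nondecreasing on `[μb, ∞)` and climbs from `-δ` to `Φ R = μa - μb > 0`. The
intermediate value theorem therefore yields points `y_k` at which `Φ` climbs by exactly `δ`, as
long as the levels stay below `Φ R`; the remaining tail `{X ≥ y_{K-1}}` carries an increment
less than `δ`, which is the final inequality.
-/

open MeasureTheory Set Filter

/-- Conditional expectation of `X` given the event `A`: `E[X·1_A] / P(A)`. -/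
noncomputable def condExpSet {Ω : Type*} [MeasurableSpace Ω] (P : Measure Ω)
    (X : Ω → ℝ) (A : Set Ω) : ℝ :=
  (∫ ω in A, X ω ∂P) / (P A).toReal

theorem exists_staircase {Φ : ℝ → ℝ} {a b δ : ℝ} (hab : a ≤ b) (hΦ : ContinuousOn Φ (Icc a b))
    (hmono : MonotoneOn Φ (Icc a b)) (hδ : 0 < δ) :
    ∃ n : ℕ, ∃ y : ℕ → ℝ, y 0 = a ∧ (∀ k, y k ∈ Icc a b) ∧ (∀ k, k + 1 ≤ n → y k ≤ y (k + 1)) ∧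
      (∀ k ≤ n, Φ (y k) = Φ a + k * δ) ∧ Φ b < Φ a + (n + 1) * δ := by
  have hΦab : Φ a ≤ Φ b := hmono (left_mem_Icc.2 hab) (right_mem_Icc.2 hab) hab
  set n := ⌊(Φ b - Φ a) / δ⌋₊
  have hn : Φ a + n * δ ≤ Φ b := by
    have := Nat.floor_le (div_nonneg (sub_nonneg.2 hΦab) hδ.le)
    rw [le_div_iff₀ hδ] at this
    linarith
  have hn' : Φ b < Φ a + (n + 1) * δ := by
    have := Nat.lt_floor_add_one ((Φ b - Φ a) / δ)
    rw [div_lt_iff₀ hδ] at this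
    linarith
  have hlevel : ∀ k : ℕ, min (Φ a + k * δ) (Φ b) ∈ Icc (Φ a) (Φ b) := fun k =>
    ⟨le_min (le_add_of_nonneg_right (by positivity)) hΦab, min_le_right _ _⟩
  choose t ht hΦt using fun k => intermediate_value_Icc hab hΦ (hlevel k)
  obtain ⟨y, hy0, hyIcc, hyΦ⟩ : ∃ y : ℕ → ℝ, y 0 = a ∧ (∀ k, y k ∈ Icc a b) ∧
      ∀ k ≤ n, Φ (y k) = Φ a + k * δ := by
    refine ⟨fun k => if k = 0 then a else t k, rfl, fun k => ?_, fun k hk => ?_⟩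
    · dsimp only
      split_ifs
      exacts [left_mem_Icc.2 hab, ht k]
    · dsimp only
      split_ifs with hk0
      · simp [hk0]
      · rw [hΦt, min_eq_left (le_trans (by gcongr) hn)]
  refine ⟨n, y, hy0, hyIcc, fun k hk => ?_, hyΦ, hn'⟩
  by_contra! hlt
  have := hmono (hyIcc _) (hyIcc _) hlt.le
  rw [hyΦ k (by omega), hyΦ (k + 1) hk] at this
  push_cast at this
  linarith

section

variable {Ω E : Type*} [MeasurableSpace Ω] [NormedAddCommGroup E] [NormedSpace ℝ E]
  {P : Measure Ω} {X : Ω → ℝ}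

theorem continuous_setIntegral_lt {f : Ω → E} (hXm : Measurable X)
    (hna : ∀ r : ℝ, P (X ⁻¹' {r}) = 0) (hf : Integrable f P) :
    Continuous fun t => ∫ ω in {ω | X ω < t}, f ω ∂P := by
  have hmeas : ∀ t, MeasurableSet {ω | X ω < t} := fun t => measurableSet_lt hXm measurable_const
  refine continuous_iff_continuousAt.2 fun t₀ => ?_
  simp_rw [← integral_indicator (hmeas _)]
  refine continuousAt_of_dominated (bound := fun ω => ‖f ω‖)
    (Eventually.of_forall fun t => (hf.indicator (hmeas t)).aestronglyMeasurable)
    (Eventually.of_forall fun t => Eventually.of_forall fun ω => norm_indicator_le_norm_self _ _)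
    hf.norm ?_
  filter_upwards [measure_eq_zero_iff_ae_notMem.1 (hna t₀)] with ω hω
  have hind : (fun t => {ω | X ω < t}.indicator f ω) = (Ioi (X ω)).indicator fun _ => f ω := by
    ext t
    simp [indicator]
  rw [hind]
  refine continuousOn_const.continuousAt_indicator ?_
  rw [frontier_Ioi]
  exact fun h => hω h.symm

theorem setIntegral_le_lt_eq_sub {f : Ω → E} (hXm : Measurable X) (hf : Integrable f P) {s t : ℝ} (hst : s ≤ t) :
    ∫ ω in {ω | s ≤ X ω ∧ X ω < t}, f ω ∂P =
      ∫ ω in {ω | X ω < t}, f ω ∂P - ∫ ω in {ω | X ω < s}, f ω ∂P := by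
  change ∫ ω in X ⁻¹' Ico s t, f ω ∂P = ∫ ω in X ⁻¹' Iio t, f ω ∂P - ∫ ω in X ⁻¹' Iio s, f ω ∂P
  rw [← Iio_union_Ico_eq_Iio hst, preimage_union, setIntegral_union
    ((Iio_disjoint_Ici le_rfl).mono_right Ico_subset_Ici_self |>.preimage X)
    (hXm measurableSet_Ico) hf.integrableOn hf.integrableOn, add_sub_cancel_left]

theorem setIntegral_le_eq_sub {f : Ω → E} (hXm : Measurable X) (hf : Integrable f P) (s : ℝ) :
    ∫ ω in {ω | s ≤ X ω}, f ω ∂P = ∫ ω, f ω ∂P - ∫ ω in {ω | X ω < s}, f ω ∂P := by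
  rw [← setIntegral_compl (measurableSet_lt hXm measurable_const) hf]
  congr
  ext
  simp

theorem setIntegral_lt_eq_integral {f : Ω → E} {r : ℝ} (hna : P (X ⁻¹' {r}) = 0) (hle : ∀ᵐ ω ∂P, X ω ≤ r) :
    ∫ ω in {ω | X ω < r}, f ω ∂P = ∫ ω, f ω ∂P := by
  refine setIntegral_eq_integral_of_ae_compl_eq_zero ?_
  filter_upwards [hle, measure_eq_zero_iff_ae_notMem.1 hna] with ω hle hne hlt
  exact absurd (hle.lt_of_ne hne) hlt

theorem setIntegral_lt_union {f : Ω → E} (hf : Integrable f P) {c : ℝ} {B : Set Ω} (hB : MeasurableSet B)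
    (hBc : B ⊆ {ω | c ≤ X ω}) :
    ∫ ω in {ω | X ω < c} ∪ B, f ω ∂P = ∫ ω in {ω | X ω < c}, f ω ∂P + ∫ ω in B, f ω ∂P :=
  setIntegral_union (disjoint_left.2 fun _ (hlt : X _ < c) hB => not_lt.2 (hBc hB) hlt) hB
    hf.integrableOn hf.integrableOn

theorem monotoneOn_setIntegral_lt_sub [IsFiniteMeasure P] (hXm : Measurable X)
    (hXi : Integrable X P) (c : ℝ) :
    MonotoneOn (fun t => ∫ ω in {ω | X ω < t}, (X ω - c) ∂P) (Ici c) := by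
  intro s hs t _ hst
  have hinc := setIntegral_le_lt_eq_sub (f := fun ω => X ω - c) hXm
    (hXi.sub (integrable_const c)) hst
  have : 0 ≤ ∫ ω in {ω | s ≤ X ω ∧ X ω < t}, (X ω - c) ∂P :=
    setIntegral_nonneg (hXm measurableSet_Ico) fun ω hω => sub_nonneg.2 (hs.trans hω.1)
  simp only
  linarith

theorem setIntegral_lt_sub_neg [IsFiniteMeasure P] (hXm : Measurable X) (hXi : Integrable X P)
    {c : ℝ} (hc : 0 < P {ω | X ω < c}) :
    ∫ ω in {ω | X ω < c}, (X ω - c) ∂P < 0 := by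
  rw [← neg_pos, ← integral_neg]
  simp only [neg_sub]
  rw [setIntegral_pos_iff_support_of_nonneg_ae
    ((ae_restrict_iff' (measurableSet_lt hXm measurable_const)).2
      (Eventually.of_forall fun ω hω => sub_nonneg.2 hω.le))
    ((integrable_const c).sub hXi).integrableOn]
  exact hc.trans_le (measure_mono fun ω hω => ⟨sub_ne_zero.2 (ne_of_gt hω), hω⟩)

theorem exists_balancing_levels [IsProbabilityMeasure P] (hXm : Measurable X)
    (hXi : Integrable X P) (hna : ∀ r : ℝ, P (X ⁻¹' {r}) = 0) {R c : ℝ}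
    (hR : ∀ᵐ ω ∂P, X ω ≤ R) (hc : c < ∫ ω, X ω ∂P) (hD0 : 0 < P {ω | X ω < c}) :
    ∃ n ≠ 0, ∃ y : ℕ → ℝ, y 0 = c ∧ (∀ k, y k ∈ Icc c R) ∧
      (∀ k, k + 1 ≤ n → y k ≤ y (k + 1)) ∧
      (∀ k, k + 1 ≤ n → ∫ ω in {ω | y k ≤ X ω ∧ X ω < y (k + 1)}, (X ω - c) ∂P =
        -∫ ω in {ω | X ω < c}, (X ω - c) ∂P) ∧
      ∫ ω in {ω | y n ≤ X ω}, (X ω - c) ∂P ≤ -∫ ω in {ω | X ω < c}, (X ω - c) ∂P := by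
  have hg : Integrable (fun ω => X ω - c) P := hXi.sub (integrable_const c)
  set Φ : ℝ → ℝ := fun t => ∫ ω in {ω | X ω < t}, (X ω - c) ∂P
  have hΦc : Φ c < 0 := setIntegral_lt_sub_neg hXm hXi hD0
  have hΦR : Φ R = ∫ ω, (X ω - c) ∂P := setIntegral_lt_eq_integral (hna R) hR
  have hmean : ∫ ω, (X ω - c) ∂P = (∫ ω, X ω ∂P) - c := by
    simp [integral_sub hXi (integrable_const c)]
  have hcR : c ≤ R := by
    have := integral_mono_ae hXi (integrable_const R) hR
    simp only [integral_const, probReal_univ, one_smul] at this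
    linarith
  obtain ⟨n, y, hy0, hyIcc, hymono, hyΦ, hΦn⟩ := exists_staircase (Φ := Φ) hcR
    (continuous_setIntegral_lt hXm hna hg).continuousOn
    ((monotoneOn_setIntegral_lt_sub hXm hXi c).mono Icc_subset_Ici_self) (neg_pos.2 hΦc)
  refine ⟨n, ?_, y, hy0, hyIcc, hymono, fun k hk => ?_, ?_⟩
  · rintro rfl
    simp only [CharP.cast_eq_zero, zero_add, one_mul, add_neg_cancel] at hΦn
    linarith
  · rw [setIntegral_le_lt_eq_sub hXm hg (hymono k hk)]
    change Φ (y (k + 1)) - Φ (y k) = _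
    rw [hyΦ _ hk, hyΦ k (by omega)]
    push_cast
    ring
  · rw [setIntegral_le_eq_sub hXm hg]
    change _ - Φ (y n) ≤ -Φ c
    rw [hyΦ n le_rfl]
    linarith

theorem condExpSet_sub [IsFiniteMeasure P] {A : Set Ω} (hX : IntegrableOn X A P) (hA : P A ≠ 0)
    (c : ℝ) : condExpSet P X A - c = (∫ ω in A, (X ω - c) ∂P) / (P A).toReal := by
  have hA' : (P A).toReal ≠ 0 := ENNReal.toReal_ne_zero.2 ⟨hA, measure_ne_top P A⟩
  rw [condExpSet, integral_sub hX (integrable_const c), setIntegral_const, smul_eq_mul,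
    measureReal_def]
  field_simp

theorem condExpSet_lt_union_sub [IsFiniteMeasure P] (hXi : Integrable X P) {c : ℝ}
    (hc : 0 < P {ω | X ω < c}) {B : Set Ω} (hB : MeasurableSet B) (hBc : B ⊆ {ω | c ≤ X ω}) :
    condExpSet P X ({ω | X ω < c} ∪ B) - c =
      ((∫ ω in {ω | X ω < c}, (X ω - c) ∂P) + ∫ ω in B, (X ω - c) ∂P) /
        (P ({ω | X ω < c} ∪ B)).toReal := by
  rw [condExpSet_sub hXi.integrableOn (hc.trans_le (measure_mono subset_union_left)).ne' c,
    setIntegral_lt_union (f := fun ω => X ω - c) (hXi.sub (integrable_const c)) hB hBc]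

theorem condExpSet_lt_union_eq [IsFiniteMeasure P] (hXi : Integrable X P) {c : ℝ}
    (hc : 0 < P {ω | X ω < c}) {B : Set Ω} (hB : MeasurableSet B) (hBc : B ⊆ {ω | c ≤ X ω})
    (hbal : ∫ ω in B, (X ω - c) ∂P = -∫ ω in {ω | X ω < c}, (X ω - c) ∂P) :
    condExpSet P X ({ω | X ω < c} ∪ B) = c := by
  rw [← sub_eq_zero, condExpSet_lt_union_sub hXi hc hB hBc, hbal, add_neg_cancel, zero_div]

theorem condExpSet_lt_union_le [IsFiniteMeasure P] (hXi : Integrable X P) {c : ℝ}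
    (hc : 0 < P {ω | X ω < c}) {B : Set Ω} (hB : MeasurableSet B) (hBc : B ⊆ {ω | c ≤ X ω})
    (hbal : ∫ ω in B, (X ω - c) ∂P ≤ -∫ ω in {ω | X ω < c}, (X ω - c) ∂P) :
    condExpSet P X ({ω | X ω < c} ∪ B) ≤ c := by
  rw [← sub_nonpos, condExpSet_lt_union_sub hXi hc hB hBc]
  exact div_nonpos_of_nonpos_of_nonneg (by linarith) ENNReal.toReal_nonneg

end

theorem exists_partition_general {Ω : Type*} [MeasurableSpace Ω] (P : Measure Ω)
    [IsProbabilityMeasure P] (X : Ω → ℝ) (hXm : Measurable X) (hXi : Integrable X P)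
    (hna : ∀ r : ℝ, P (X ⁻¹' {r}) = 0)
    (L R : ℝ) (hbdd : ∀ᵐ ω ∂P, L ≤ X ω ∧ X ω ≤ R)
    (μa μb : ℝ) (hμa : μa = ∫ ω, X ω ∂P) (hμab : μb < μa)
    (hD0 : 0 < P {ω | X ω < μb}) :
    ∃ K : ℕ, 2 ≤ K ∧ ∃ y : ℕ → ℝ,
      y 0 = μb ∧
      (∀ i, i + 1 ≤ K - 1 → y i ≤ y (i + 1)) ∧
      y (K - 1) ≤ R ∧
      (∀ k, 1 ≤ k → k ≤ K - 1 →
        0 < P {ω | y (k - 1) ≤ X ω ∧ X ω < y k} ∧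
        condExpSet P X ({ω | X ω < μb} ∪ {ω | y (k - 1) ≤ X ω ∧ X ω < y k}) = μb) ∧
      condExpSet P X ({ω | X ω < μb} ∪ {ω | y (K - 1) ≤ X ω}) ≤ μb := by
  obtain ⟨n, hn, y, hy0, hyIcc, hymono, hslice, htail⟩ :=
    exists_balancing_levels hXm hXi hna (hbdd.mono fun _ h => h.2) (hμa ▸ hμab) hD0
  refine ⟨n + 1, by omega, y, hy0, by simpa using hymono, by simpa using (hyIcc n).2,
    fun k hk1 hkn => ?_, ?_⟩
  · obtain ⟨j, rfl⟩ : ∃ j, k = j + 1 := ⟨k - 1, by omega⟩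
    simp only [Nat.add_sub_cancel] at hkn ⊢
    refine ⟨pos_iff_ne_zero.2 fun h0 => ?_, condExpSet_lt_union_eq hXi hD0
      (hXm measurableSet_Ico) (fun ω hω => (hyIcc j).1.trans hω.1) (hslice j hkn)⟩
    have := hslice j hkn
    rw [setIntegral_measure_zero _ h0] at this
    linarith [setIntegral_lt_sub_neg hXm hXi hD0]
  · exact condExpSet_lt_union_le hXi hD0 (measurableSet_le measurable_const hXm)
      (fun ω hω => (hyIcc n).1.trans hω) htail

/-- existence of the partition `{D_k}` of Lemma 1 (without the bound on `K`). -/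
theorem exists_partition {Ω : Type*} [MeasurableSpace Ω] (P : Measure Ω)
    [IsProbabilityMeasure P] (X : Ω → ℝ) (hXm : Measurable X) (hXi : Integrable X P)
    (hna : ∀ r : ℝ, P (X ⁻¹' {r}) = 0)
    (L R : ℝ) (hLR : L < R) (hbdd : ∀ᵐ ω ∂P, L ≤ X ω ∧ X ω ≤ R)
    (μa μb : ℝ) (hμa : μa = ∫ ω, X ω ∂P) (hμab : μb < μa)
    (hD0 : 0 < P {ω | X ω < μb}) :
    ∃ K : ℕ, 2 ≤ K ∧ ∃ y : ℕ → ℝ,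
      y 0 = μb ∧
      (∀ i, i + 1 ≤ K - 1 → y i ≤ y (i + 1)) ∧
      y (K - 1) ≤ R ∧
      (∀ k, 1 ≤ k → k ≤ K - 1 →
        0 < P {ω | y (k - 1) ≤ X ω ∧ X ω < y k} ∧
        condExpSet P X ({ω | X ω < μb} ∪ {ω | y (k - 1) ≤ X ω ∧ X ω < y k}) = μb) ∧
      condExpSet P X ({ω | X ω < μb} ∪ {ω | y (K - 1) ≤ X ω}) ≤ μb :=
  exists_partition_general P X hXm hXi hna L R hbdd μa μb hμa hμab hD0
end

section
/- Let X be an integrable real-valued random variable on a probability space with nonatomic distribution, L ≤ X ≤ R almost surely, μ_a = E[X], and let μ_b satisfy 0 ≤ μ_b < μ_a and P(X < μ_b) > 0, with D_0 = {X < μ_b}. Suppose K ≥ 2 is an integer and μ_b = y_0 ≤ y_1 ≤ … ≤ y_{K-1} ≤ R are reals such that, with D_k = {y_{k-1} ≤ X < y_k} for 1 ≤ k ≤ K−1 and D_K = {X ≥ y_{K-1}}, one has P(D_k) > 0 for 1 ≤ k ≤ K−1, E[X | D_0 ∪ D_k] = μ_b for 1 ≤ k ≤ K−1, and E[X | D_0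 ∪ D_K] ≤ μ_b. Then K ≤ (μ_a − μ_b/2) / (P(X ∈ D_0)·(μ_b − E[X | D_0])) + 2. -/
/-!
Weigh every event `A` by its excess `∫_A (X - μ_b) dP`, which is additive over disjoint events.
`E[X | D_0 ∪ D_k] = μ_b` says that each middle cell `D_k` has excess
`c := -∫_{D_0} (X - μ_b) dP = P(D_0) (μ_b - E[X | D_0]) > 0`, and the last cell lies above
`μ_b`, so its excess is nonnegative. Summing over the partition `D_0, …, D_K` of `Ω` gives
`μ_a - μ_b ≥ (K - 2) c`.
-/

open MeasureTheory

open Set Finset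

theorem setOf_le_eq_union_of_le {Ω : Type*} {X : Ω → ℝ} {a b : ℝ} (h : a ≤ b) :
    {ω | a ≤ X ω} = {ω | a ≤ X ω ∧ X ω < b} ∪ {ω | b ≤ X ω} := by
  change X ⁻¹' Ici a = X ⁻¹' Ico a b ∪ X ⁻¹' Ici b
  rw [← preimage_union, Ico_union_Ici_eq_Ici h]

section

variable {Ω : Type*} [MeasurableSpace Ω] {P : Measure Ω} {X : Ω → ℝ} {m : ℝ}

theorem setIntegral_sub_const_eq_measureReal_mul_condExpSet_sub [IsFiniteMeasure P]
    (hX : Integrable X P) (A : Set Ω) :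
    ∫ ω in A, (X ω - m) ∂P = P.real A * (condExpSet P X A - m) := by
  by_cases hA : P A = 0
  · simp [Measure.restrict_eq_zero.2 hA, measureReal_def, hA]
  · have hA' : P.real A ≠ 0 := (measureReal_ne_zero_iff).2 hA
    rw [integral_sub hX.integrableOn (integrableOn_const (measure_ne_top P A)),
      setIntegral_const, smul_eq_mul, condExpSet, ← measureReal_def]
    field_simp

theorem setIntegral_sub_const_eq_neg_of_condExpSet_union_eq [IsFiniteMeasure P]
    (hX : Integrable X P) {A B : Set Ω} (hB : MeasurableSet B) (hAB : Disjoint A B)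
    (h : condExpSet P X (A ∪ B) = m) :
    ∫ ω in B, (X ω - m) ∂P = -∫ ω in A, (X ω - m) ∂P := by
  have hXm : Integrable (fun ω ↦ X ω - m) P := hX.sub (integrable_const m)
  have hunion := setIntegral_sub_const_eq_measureReal_mul_condExpSet_sub (m := m) hX (A ∪ B)
  rw [h, sub_self, mul_zero,
    setIntegral_union hAB hB hXm.integrableOn hXm.integrableOn] at hunion
  linarith

theorem setIntegral_Ico_sub_const_eq_neg_of_condExpSet_union_eq [IsFiniteMeasure P]
    (hXm : Measurable X) (hX : Integrable X P) {a b : ℝ} (hma : m ≤ a)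
    (h : condExpSet P X ({ω | X ω < m} ∪ {ω | a ≤ X ω ∧ X ω < b}) = m) :
    ∫ ω in {ω | a ≤ X ω ∧ X ω < b}, (X ω - m) ∂P =
      -∫ ω in {ω | X ω < m}, (X ω - m) ∂P :=
  setIntegral_sub_const_eq_neg_of_condExpSet_union_eq hX (hXm measurableSet_Ico)
    (Set.disjoint_left.2 fun _ hlt hω ↦ absurd hlt (not_lt.2 (hma.trans hω.1))) h

theorem setIntegral_setOf_lt_sub_const_lt_zero [IsFiniteMeasure P] (hXm : Measurable X)
    (hX : Integrable X P) (h : 0 < P {ω | X ω < m}) :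
    ∫ ω in {ω | X ω < m}, (X ω - m) ∂P < 0 := by
  have hs : MeasurableSet {ω | X ω < m} := measurableSet_lt hXm measurable_const
  rw [← neg_pos, ← integral_neg]
  simp_rw [neg_sub]
  rw [setIntegral_pos_iff_support_of_nonneg_ae (f := fun ω ↦ m - X ω) _
    ((integrable_const m).sub hX).integrableOn]
  · refine h.trans_le (measure_mono fun ω hω ↦ ⟨sub_ne_zero.2 (ne_of_gt hω), hω⟩)
  · filter_upwards [ae_restrict_mem hs] with ω hω
    exact sub_nonneg.2 (le_of_lt hω)

theorem setIntegral_setOf_le_eq_sum_Ico_add (hXm : Measurable X) {f : Ω → ℝ}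
    (hf : Integrable f P) {y : ℕ → ℝ} {n : ℕ} (hy : ∀ i < n, y i ≤ y (i + 1)) :
    ∫ ω in {ω | y 0 ≤ X ω}, f ω ∂P =
      ∑ i ∈ range n, ∫ ω in {ω | y i ≤ X ω ∧ X ω < y (i + 1)}, f ω ∂P +
        ∫ ω in {ω | y n ≤ X ω}, f ω ∂P := by
  induction n with
  | zero => simp
  | succ n ih =>
    have hdisj : Disjoint {ω | y n ≤ X ω ∧ X ω < y (n + 1)} {ω | y (n + 1) ≤ X ω} :=
      Set.disjoint_left.2 fun ω hω hω' ↦ absurd hω.2 (not_lt.2 hω')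
    rw [ih fun i hi ↦ hy i (by omega), setOf_le_eq_union_of_le (hy n n.lt_succ_self),
      setIntegral_union hdisj (measurableSet_le measurable_const hXm) hf.integrableOn
        hf.integrableOn, sum_range_succ]
    ring

theorem integral_eq_setIntegral_setOf_lt_add_sum_Ico_add (hXm : Measurable X) {f : Ω → ℝ}
    (hf : Integrable f P) {y : ℕ → ℝ} {n : ℕ} (hy : ∀ i < n, y i ≤ y (i + 1)) :
    ∫ ω, f ω ∂P = ∫ ω in {ω | X ω < y 0}, f ω ∂P +
      (∑ i ∈ range n, ∫ ω in {ω | y i ≤ X ω ∧ X ω < y (i + 1)}, f ω ∂P +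
        ∫ ω in {ω | y n ≤ X ω}, f ω ∂P) := by
  have hcompl : {ω | X ω < y 0}ᶜ = {ω | y 0 ≤ X ω} := by
    ext
    simp
  rw [← setIntegral_setOf_le_eq_sum_Ico_add hXm hf hy, ← hcompl,
    integral_add_compl (measurableSet_lt hXm measurable_const) hf]

end

theorem partition_upper_bound_general {Ω : Type*} [MeasurableSpace Ω] (P : Measure Ω)
    [IsProbabilityMeasure P] (X : Ω → ℝ) (hXm : Measurable X) (hXi : Integrable X P)
    (μa μb : ℝ) (hμa : μa = ∫ ω, X ω ∂P) (hμb0 : 0 ≤ μb)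
    (hD0 : 0 < P {ω | X ω < μb})
    (K : ℕ) (y : ℕ → ℝ)
    (hy0 : y 0 = μb)
    (hmono : ∀ i, i + 1 ≤ K - 1 → y i ≤ y (i + 1))
    (heq : ∀ k, 1 ≤ k → k ≤ K - 1 →
      condExpSet P X ({ω | X ω < μb} ∪ {ω | y (k - 1) ≤ X ω ∧ X ω < y k}) = μb) :
    (K : ℝ) ≤ (μa - μb / 2) /
        ((P {ω | X ω < μb}).toReal * (μb - condExpSet P X {ω | X ω < μb})) + 2 := by
  set D0 := {ω | X ω < μb}
  set c := -∫ ω in D0, (X ω - μb) ∂P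
  have hc : 0 < c := neg_pos.2 (setIntegral_setOf_lt_sub_const_lt_zero hXm hXi hD0)
  have hden : (P D0).toReal * (μb - condExpSet P X D0) = c := by
    rw [← measureReal_def]
    simp only [c, setIntegral_sub_const_eq_measureReal_mul_condExpSet_sub hXi]
    ring
  have hymono : MonotoneOn y (Set.Iic (K - 1)) :=
    monotoneOn_of_le_succ ordConnected_Iic fun i _ _ hi ↦ hmono i hi
  have hμby : ∀ i ≤ K - 1, μb ≤ y i := fun i hi ↦
    hy0 ▸ hymono (Nat.zero_le (K - 1)) hi (Nat.zero_le i)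
  have hcell : ∀ i ∈ range (K - 1),
      ∫ ω in {ω | y i ≤ X ω ∧ X ω < y (i + 1)}, (X ω - μb) ∂P = c := fun i hi ↦ by
    have hi : i < K - 1 := mem_range.1 hi
    simpa using setIntegral_Ico_sub_const_eq_neg_of_condExpSet_union_eq hXm hXi (hμby i hi.le)
      (heq (i + 1) (by omega) hi)
  have hlast : 0 ≤ ∫ ω in {ω | y (K - 1) ≤ X ω}, (X ω - μb) ∂P :=
    setIntegral_nonneg (measurableSet_le measurable_const hXm)
      fun ω hω ↦ sub_nonneg.2 ((hμby _ le_rfl).trans hω)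
  have htotal : μa - μb =
      -c + ((K - 1 : ℕ) * c + ∫ ω in {ω | y (K - 1) ≤ X ω}, (X ω - μb) ∂P) := by
    have hmean : ∫ ω, (X ω - μb) ∂P = μa - μb := by
      rw [integral_sub hXi (integrable_const μb), integral_const, hμa, probReal_univ, one_smul]
    rw [← hmean, integral_eq_setIntegral_setOf_lt_add_sum_Ico_add (f := fun ω ↦ X ω - μb) hXm
      (hXi.sub (integrable_const μb)) hmono, hy0, sum_congr rfl hcell, sum_const, card_range,
      nsmul_eq_mul, neg_neg]
  have hcount : (K : ℝ) - 1 ≤ (K - 1 : ℕ) := by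
    rw [sub_le_iff_le_add]
    exact_mod_cast (show K ≤ K - 1 + 1 by omega)
  have hcells := mul_le_mul_of_nonneg_right hcount hc.le
  rw [hden, ← sub_le_iff_le_add, le_div_iff₀ hc]
  linarith

/-- upper bound on the number `K` of cells of a partition as in Lemma 1. -/
theorem partition_upper_bound {Ω : Type*} [MeasurableSpace Ω] (P : Measure Ω)
    [IsProbabilityMeasure P] (X : Ω → ℝ) (hXm : Measurable X) (hXi : Integrable X P)
    (hna : ∀ r : ℝ, P (X ⁻¹' {r}) = 0)
    (L R : ℝ) (hLR : L < R) (hbdd : ∀ᵐ ω ∂P, L ≤ X ω ∧ X ω ≤ R)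
    (μa μb : ℝ) (hμa : μa = ∫ ω, X ω ∂P) (hμb0 : 0 ≤ μb) (hμab : μb < μa)
    (hD0 : 0 < P {ω | X ω < μb})
    (K : ℕ) (hK : 2 ≤ K) (y : ℕ → ℝ)
    (hy0 : y 0 = μb)
    (hmono : ∀ i, i + 1 ≤ K - 1 → y i ≤ y (i + 1))
    (hyR : y (K - 1) ≤ R)
    (hpos : ∀ k, 1 ≤ k → k ≤ K - 1 → 0 < P {ω | y (k - 1) ≤ X ω ∧ X ω < y k})
    (heq : ∀ k, 1 ≤ k → k ≤ K - 1 →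
      condExpSet P X ({ω | X ω < μb} ∪ {ω | y (k - 1) ≤ X ω ∧ X ω < y k}) = μb)
    (hlast : condExpSet P X ({ω | X ω < μb} ∪ {ω | y (K - 1) ≤ X ω}) ≤ μb) :
    (K : ℝ) ≤ (μa - μb / 2) /
        ((P {ω | X ω < μb}).toReal * (μb - condExpSet P X {ω | X ω < μb})) + 2 :=
  partition_upper_bound_general P X hXm hXi μa μb hμa hμb0 hD0 K y hy0 hmono heq
end

section
/- Let X be an integrable real-valued random variable on a probability space with nonatomic distribution, L ≤ X ≤ R almost surely, μ_a = E[X], and let μ_b satisfy μ_b < μ_a and P(X < μ_b) > 0, with D_0 = {X < μ_b}. Suppose K ≥ 2 is an integer and μ_b = y_0 ≤ y_1 ≤ … ≤ y_{K-1} ≤ R are reals such that, with D_k = {y_{k-1} ≤ X < y_k} for 1 ≤ k ≤ K−1 and D_K = {X ≥ y_{K-1}}, one has E[X | D_0 ∪ D_k] = μ_b for 1 ≤ k ≤ K−1 and E[X | D_0 ∪ D_K] ≤ μ_b. Then K ≥ (μ_a − μ_b) / (P(X ∈ D_0)·(μ_b − E[X | D_0])) + 1. -/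
/-!
Write `F t = ∫_{X < t} (X - μ_b)`. A conditional mean equal to `μ_b` on `D_0 ∪ D_k` says that
the integral of `X - μ_b` over it vanishes, i.e. `F(y_k) - F(y_{k-1}) = -F(y_0)`; telescoping
gives `F(y_{K-1}) = -(K - 2) · F(y_0)`. The condition on the last cell says
`F(y_0) + (μ_a - μ_b) - F(y_{K-1}) ≤ 0`, so `μ_a - μ_b ≤ (K - 1) · (-F(y_0))`, and
`-F(y_0) = P(D_0) · (μ_b - E[X | D_0])` is the denominator of the bound.
-/

open MeasureTheory

section ThresholdIntegrals

variable {Ω : Type*} [MeasurableSpace Ω] {P : Measure Ω} {X g : Ω → ℝ}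

lemma setIntegral_sub_const_eq_condExpSet_sub_mul [IsFiniteMeasure P] (hX : Integrable X P)
    (A : Set Ω) (c : ℝ) :
    ∫ ω in A, (X ω - c) ∂P = (condExpSet P X A - c) * P.real A := by
  rw [integral_sub hX.integrableOn (integrable_const c), setIntegral_const, smul_eq_mul,
    condExpSet, ← measureReal_def]
  by_cases hA : P.real A = 0
  · rw [measureReal_eq_zero_iff] at hA
    simp [Measure.restrict_eq_zero.mpr hA, mul_comm]
  · field_simp

lemma setIntegral_lt_union_Ico (hX : Measurable X) (hg : Integrable g P) {a b c : ℝ}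
    (hab : a ≤ b) (hbc : b ≤ c) :
    ∫ ω in {ω | X ω < a} ∪ {ω | b ≤ X ω ∧ X ω < c}, g ω ∂P =
      ∫ ω in {ω | X ω < a}, g ω ∂P +
        (∫ ω in {ω | X ω < c}, g ω ∂P - ∫ ω in {ω | X ω < b}, g ω ∂P) := by
  have hdiff : {ω | b ≤ X ω ∧ X ω < c} = {ω | X ω < c} \ {ω | X ω < b} := by
    ext ω; simp [and_comm]
  have hdisj : Disjoint {ω | X ω < a} {ω | b ≤ X ω ∧ X ω < c} :=
    Set.disjoint_left.mpr fun ω ha hb => (ha.trans_le hab).not_ge hb.1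
  rw [setIntegral_union hdisj ((measurableSet_le measurable_const hX).inter
      (measurableSet_lt hX measurable_const)) hg.integrableOn hg.integrableOn, hdiff,
    setIntegral_sdiff (s := {ω | X ω < c}) (measurableSet_lt hX measurable_const)
      hg.integrableOn fun ω hω => lt_of_lt_of_le hω hbc]

lemma setIntegral_lt_union_ge (hX : Measurable X) (hg : Integrable g P) {a b : ℝ}
    (hab : a ≤ b) :
    ∫ ω in {ω | X ω < a} ∪ {ω | b ≤ X ω}, g ω ∂P =
      ∫ ω in {ω | X ω < a}, g ω ∂P +
        (∫ ω, g ω ∂P - ∫ ω in {ω | X ω < b}, g ω ∂P) := by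
  have hcompl : {ω | b ≤ X ω} = {ω | X ω < b}ᶜ := by
    ext ω; simp
  have hdisj : Disjoint {ω | X ω < a} {ω | b ≤ X ω} :=
    Set.disjoint_left.mpr fun ω ha hb => (ha.trans_le hab).not_ge hb
  rw [setIntegral_union hdisj (measurableSet_le measurable_const hX) hg.integrableOn
    hg.integrableOn, hcompl,
    ← integral_add_compl (s := {ω | X ω < b}) (measurableSet_lt hX measurable_const) hg]
  ring

lemma setIntegral_lt_eq_sub_of_condExpSet_eq [IsFiniteMeasure P] (hX : Measurable X)
    (hXi : Integrable X P) {a b c : ℝ} (hab : a ≤ b) (hbc : b ≤ c)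
    (h : condExpSet P X ({ω | X ω < a} ∪ {ω | b ≤ X ω ∧ X ω < c}) = a) :
    ∫ ω in {ω | X ω < c}, (X ω - a) ∂P =
      ∫ ω in {ω | X ω < b}, (X ω - a) ∂P - ∫ ω in {ω | X ω < a}, (X ω - a) ∂P := by
  have h0 := setIntegral_sub_const_eq_condExpSet_sub_mul hXi
    ({ω | X ω < a} ∪ {ω | b ≤ X ω ∧ X ω < c}) a
  rw [h, sub_self, zero_mul, setIntegral_lt_union_Ico (g := fun ω => X ω - a) hX
    (hXi.sub (integrable_const a)) hab hbc] at h0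
  linarith

lemma integral_sub_le_of_condExpSet_le [IsFiniteMeasure P] (hX : Measurable X)
    (hXi : Integrable X P) {a b : ℝ} (hab : a ≤ b)
    (h : condExpSet P X ({ω | X ω < a} ∪ {ω | b ≤ X ω}) ≤ a) :
    ∫ ω, (X ω - a) ∂P ≤
      ∫ ω in {ω | X ω < b}, (X ω - a) ∂P - ∫ ω in {ω | X ω < a}, (X ω - a) ∂P := by
  have h0 := setIntegral_sub_const_eq_condExpSet_sub_mul hXi
    ({ω | X ω < a} ∪ {ω | b ≤ X ω}) a
  rw [setIntegral_lt_union_ge (g := fun ω => X ω - a) hX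
    (hXi.sub (integrable_const a)) hab] at h0
  linarith [mul_nonpos_of_nonpos_of_nonneg (sub_nonpos.mpr h)
    (measureReal_nonneg (μ := P) (s := {ω | X ω < a} ∪ {ω | b ≤ X ω}))]

end ThresholdIntegrals

lemma eq_one_sub_mul_of_succ_eq_sub {F : ℕ → ℝ} {n : ℕ}
    (h : ∀ k < n, F (k + 1) = F k - F 0) :
    ∀ k ≤ n, F k = (1 - k) * F 0
  | 0, _ => by simp
  | k + 1, hk => by
    rw [h k hk, eq_one_sub_mul_of_succ_eq_sub h k (Nat.le_of_succ_le hk)]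
    push_cast
    ring

theorem partition_lower_bound_general {Ω : Type*} [MeasurableSpace Ω] (P : Measure Ω)
    [IsProbabilityMeasure P] (X : Ω → ℝ) (hXm : Measurable X) (hXi : Integrable X P)
    (μa μb : ℝ) (hμa : μa = ∫ ω, X ω ∂P)
    (K : ℕ) (hK : 2 ≤ K) (y : ℕ → ℝ)
    (hy0 : y 0 = μb)
    (hmono : ∀ i, i + 1 ≤ K - 1 → y i ≤ y (i + 1))
    (heq : ∀ k, 1 ≤ k → k ≤ K - 1 →
      condExpSet P X ({ω | X ω < μb} ∪ {ω | y (k - 1) ≤ X ω ∧ X ω < y k}) = μb)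
    (hlast : condExpSet P X ({ω | X ω < μb} ∪ {ω | y (K - 1) ≤ X ω}) ≤ μb) :
    (μa - μb) /
        ((P {ω | X ω < μb}).toReal * (μb - condExpSet P X {ω | X ω < μb})) + 1 ≤ (K : ℝ) := by
  subst hy0
  set F : ℕ → ℝ := fun k => ∫ ω in {ω | X ω < y k}, (X ω - y 0) ∂P with hF
  have hy : MonotoneOn y (Set.Iic (K - 1)) :=
    monotoneOn_of_le_succ Set.ordConnected_Iic fun i _ _ hi => hmono i hi
  have hden :
      (P {ω | X ω < y 0}).toReal * (y 0 - condExpSet P X {ω | X ω < y 0}) = -F 0 := by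
    simp only [hF]
    rw [setIntegral_sub_const_eq_condExpSet_sub_mul hXi, measureReal_def]
    ring
  have hF0 : F 0 ≤ 0 :=
    setIntegral_nonpos (measurableSet_lt hXm measurable_const) fun ω hω => by
      simp only [Set.mem_ofPred_eq] at hω; linarith
  have hstep : ∀ k < K - 1, F (k + 1) = F k - F 0 := fun k hk => by
    have hcond := heq (k + 1) (by omega) (by omega)
    rw [Nat.add_sub_cancel] at hcond
    exact setIntegral_lt_eq_sub_of_condExpSet_eq hXm hXi
      (hy (by simp) (by simp; omega) (Nat.zero_le k)) (hmono k (by omega)) hcond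
  have hcell : μa - y 0 ≤ F (K - 1) - F 0 := by
    have h := integral_sub_le_of_condExpSet_le hXm hXi
      (hy (by simp) (by simp) (Nat.zero_le _)) hlast
    rwa [integral_sub hXi (integrable_const _), ← hμa, integral_const, probReal_univ,
      one_smul] at h
  rw [eq_one_sub_mul_of_succ_eq_sub hstep (K - 1) le_rfl, Nat.cast_pred (by omega)] at hcell
  have hK1 : (0 : ℝ) ≤ K - 1 := by
    have : (2 : ℝ) ≤ K := by exact_mod_cast hK
    linarith
  have hbound : μa - y 0 ≤ (K - 1) * -F 0 := by linarith
  rw [hden]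
  linarith [div_le_of_le_mul₀ (neg_nonneg.mpr hF0) hK1 hbound]

/-- lower bound on the number `K` of cells of a partition as in Lemma 1. -/
theorem partition_lower_bound {Ω : Type*} [MeasurableSpace Ω] (P : Measure Ω)
    [IsProbabilityMeasure P] (X : Ω → ℝ) (hXm : Measurable X) (hXi : Integrable X P)
    (hna : ∀ r : ℝ, P (X ⁻¹' {r}) = 0)
    (L R : ℝ) (hLR : L < R) (hbdd : ∀ᵐ ω ∂P, L ≤ X ω ∧ X ω ≤ R)
    (μa μb : ℝ) (hμa : μa = ∫ ω, X ω ∂P) (hμab : μb < μa)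
    (hD0 : 0 < P {ω | X ω < μb})
    (K : ℕ) (hK : 2 ≤ K) (y : ℕ → ℝ)
    (hy0 : y 0 = μb)
    (hmono : ∀ i, i + 1 ≤ K - 1 → y i ≤ y (i + 1))
    (hyR : y (K - 1) ≤ R)
    (heq : ∀ k, 1 ≤ k → k ≤ K - 1 →
      condExpSet P X ({ω | X ω < μb} ∪ {ω | y (k - 1) ≤ X ω ∧ X ω < y k}) = μb)
    (hlast : condExpSet P X ({ω | X ω < μb} ∪ {ω | y (K - 1) ≤ X ω}) ≤ μb) :
    (μa - μb) /
        ((P {ω | X ω < μb}).toReal * (μb - condExpSet P X {ω | X ω < μb})) + 1 ≤ (K : ℝ) :=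
  partition_lower_bound_general P X hXm hXi μa μb hμa K hK y hy0 hmono heq hlast
end

section
/- Let X be an integrable real-valued random variable on a probability space with X ≤ R almost surely for some real R > 0, let μ_b ≥ 0 be a real number, and let D_0 be an event with P(D_0) > 0 and E[X | D_0] < μ_b. If D_1, …, D_m are pairwise disjoint events, each disjoint from D_0, such that E[X | D_0 ∪ D_k] = μ_b for every 1 ≤ k ≤ m, then m ≤ R / (P(D_0)·(μ_b − E[X | D_0])). -/
open MeasureTheory

/-! Adding a cell `D` to `D₀` raises the conditional mean from `E[X | D₀]` to `μ_b`, so the mass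
`∫_D X - μ_b P(D)` that `D` contributes above level `μ_b` must equal the deficit
`P(D₀) (μ_b - E[X | D₀])` of `D₀`. As `X ≤ R` and `μ_b ≥ 0`, that mass is at most `R P(D)`;
summing over the disjoint cells, whose probabilities add up to at most `1`, gives
`m P(D₀) (μ_b - E[X | D₀]) ≤ R`. -/

section

variable {Ω : Type*} [MeasurableSpace Ω] {P : Measure Ω} {X : Ω → ℝ}

lemma setIntegral_eq_condExpSet_mul_measureReal {A : Set Ω} (hA : P.real A ≠ 0) :
    ∫ ω in A, X ω ∂P = condExpSet P X A * P.real A := by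
  rw [condExpSet, ← measureReal_def, div_mul_cancel₀ _ hA]

lemma setIntegral_le_mul_measureReal [IsFiniteMeasure P] {R : ℝ} (hXi : Integrable X P)
    (hbdd : ∀ᵐ ω ∂P, X ω ≤ R) (B : Set Ω) :
    ∫ ω in B, X ω ∂P ≤ R * P.real B := by
  calc ∫ ω in B, X ω ∂P ≤ ∫ _ in B, R ∂P :=
        setIntegral_mono_ae hXi.integrableOn integrableOn_const hbdd
    _ = R * P.real B := by rw [setIntegral_const, smul_eq_mul, mul_comm]

variable [IsFiniteMeasure P] {A B : Set Ω} {μb : ℝ}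

lemma measureReal_mul_sub_condExpSet_eq_of_condExpSet_union (hXi : Integrable X P)
    (hA : P.real A ≠ 0) (hB : MeasurableSet B) (hAB : Disjoint A B)
    (hbal : condExpSet P X (A ∪ B) = μb) :
    P.real A * (μb - condExpSet P X A) = ∫ ω in B, X ω ∂P - μb * P.real B := by
  have hAB_ne : P.real (A ∪ B) ≠ 0 :=
    ((measureReal_nonneg.lt_of_ne' hA).trans_le (measureReal_mono Set.subset_union_left)).ne'
  have hunion := setIntegral_eq_condExpSet_mul_measureReal (X := X) hAB_ne
  rw [hbal, setIntegral_union hAB hB hXi.integrableOn hXi.integrableOn,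
    measureReal_union hAB hB, setIntegral_eq_condExpSet_mul_measureReal hA] at hunion
  linear_combination -hunion

lemma measureReal_mul_sub_condExpSet_le_mul_measureReal {R : ℝ} (hXi : Integrable X P)
    (hbdd : ∀ᵐ ω ∂P, X ω ≤ R) (hμb : 0 ≤ μb) (hA : P.real A ≠ 0) (hB : MeasurableSet B)
    (hAB : Disjoint A B) (hbal : condExpSet P X (A ∪ B) = μb) :
    P.real A * (μb - condExpSet P X A) ≤ R * P.real B := by
  rw [measureReal_mul_sub_condExpSet_eq_of_condExpSet_union hXi hA hB hAB hbal]
  have hmass : 0 ≤ μb * P.real B := mul_nonneg hμb measureReal_nonneg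
  linarith [setIntegral_le_mul_measureReal hXi hbdd B]

end

theorem number_of_cells_bound_general {Ω : Type*} [MeasurableSpace Ω] (P : Measure Ω)
    [IsProbabilityMeasure P] (X : Ω → ℝ) (hXi : Integrable X P)
    (R : ℝ) (hR : 0 < R) (hbdd : ∀ᵐ ω ∂P, X ω ≤ R)
    (μb : ℝ) (hμb : 0 ≤ μb)
    (D0 : Set Ω) (hD0 : 0 < P D0)
    (hlt : condExpSet P X D0 < μb)
    (m : ℕ) (D : Fin m → Set Ω) (hDm : ∀ k, MeasurableSet (D k))
    (hdisj : Pairwise fun i j => Disjoint (D i) (D j))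
    (hdisj0 : ∀ k, Disjoint D0 (D k))
    (heq : ∀ k, condExpSet P X (D0 ∪ D k) = μb) :
    (m : ℝ) ≤ R / ((P D0).toReal * (μb - condExpSet P X D0)) := by
  have hD0_real : 0 < P.real D0 := ENNReal.toReal_pos hD0.ne' (measure_ne_top P D0)
  have hdeficit : 0 < P.real D0 * (μb - condExpSet P X D0) := mul_pos hD0_real (sub_pos.2 hlt)
  rw [← measureReal_def, le_div_iff₀ hdeficit]
  calc (m : ℝ) * (P.real D0 * (μb - condExpSet P X D0))
      = ∑ _k : Fin m, P.real D0 * (μb - condExpSet P X D0) := by simp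
    _ ≤ ∑ k, R * P.real (D k) := Finset.sum_le_sum fun k _ =>
        measureReal_mul_sub_condExpSet_le_mul_measureReal hXi hbdd hμb hD0_real.ne' (hDm k)
          (hdisj0 k) (heq k)
    _ = R * P.real (⋃ k, D k) := by rw [measureReal_iUnion_fintype hdisj hDm, Finset.mul_sum]
    _ ≤ R := mul_le_of_le_one_right hR.le measureReal_le_one

/-- bound on the number of disjoint "balancing" events. -/
theorem number_of_cells_bound {Ω : Type*} [MeasurableSpace Ω] (P : Measure Ω)
    [IsProbabilityMeasure P] (X : Ω → ℝ) (hXi : Integrable X P)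
    (R : ℝ) (hR : 0 < R) (hbdd : ∀ᵐ ω ∂P, X ω ≤ R)
    (μb : ℝ) (hμb : 0 ≤ μb)
    (D0 : Set Ω) (hD0m : MeasurableSet D0) (hD0 : 0 < P D0)
    (hlt : condExpSet P X D0 < μb)
    (m : ℕ) (D : Fin m → Set Ω) (hDm : ∀ k, MeasurableSet (D k))
    (hdisj : Pairwise fun i j => Disjoint (D i) (D j))
    (hdisj0 : ∀ k, Disjoint D0 (D k))
    (heq : ∀ k, condExpSet P X (D0 ∪ D k) = μb) :
    (m : ℝ) ≤ R / ((P D0).toReal * (μb - condExpSet P X D0)) :=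
  number_of_cells_bound_general P X hXi R hR hbdd μb hμb D0 hD0 hlt m D hDm hdisj hdisj0 heq
end

section
/- Let X be an integrable real-valued random variable on a probability space, let μ_b be a real number, and let D_0, D', D'' be pairwise disjoint events, each of positive probability, such that E[X | D''] ≥ E[X | D'] > μ_b, E[X | D_0 ∪ D'] = μ_b, and E[X | D_0 ∪ D''] ≤ μ_b. Then P(D'') ≤ P(D'). -/
/-! Write `pᵢ` for the masses, `mᵢ` for the conditional means of `D'`, `D''` and `s` for
`∫ X` over `D0`. The two pooled conditions give `s + m₁ p₁ = μ (p₀ + p₁)` and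
`s + m₂ p₂ ≤ μ (p₀ + p₂)`; subtracting, `m₂ p₂ - m₁ p₁ ≤ μ (p₂ - p₁)`. If `p₂ > p₁`, the left
side is at least `m₁ (p₂ - p₁) > μ (p₂ - p₁)`, a contradiction. -/

open MeasureTheory

theorem le_of_pooled_mean_comparison {s μ m₁ m₂ p₀ p₁ p₂ : ℝ} (hp₁ : 0 ≤ p₁)
    (hm : m₁ ≤ m₂) (hμ : μ < m₁) (heq : s + m₁ * p₁ = μ * (p₀ + p₁))
    (hle : s + m₂ * p₂ ≤ μ * (p₀ + p₂)) : p₂ ≤ p₁ := by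
  by_contra! hlt
  nlinarith [mul_le_mul_of_nonneg_right hm (hp₁.trans hlt.le),
    mul_lt_mul_of_pos_right hμ (sub_pos.2 hlt)]

section condExpSet

variable {Ω : Type*} [MeasurableSpace Ω] {P : Measure Ω} [IsFiniteMeasure P] {X : Ω → ℝ}
  {A B : Set Ω}

theorem setIntegral_eq_condExpSet_mul (hA : P A ≠ 0) :
    ∫ ω in A, X ω ∂P = condExpSet P X A * (P A).toReal :=
  (div_mul_cancel₀ _ (ENNReal.toReal_ne_zero.2 ⟨hA, measure_ne_top P A⟩)).symm

theorem condExpSet_union (hX : Integrable X P) (hAB : Disjoint A B) (hB : MeasurableSet B) :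
    condExpSet P X (A ∪ B) =
      ((∫ ω in A, X ω ∂P) + ∫ ω in B, X ω ∂P) / ((P A).toReal + (P B).toReal) := by
  rw [condExpSet, setIntegral_union hAB hB hX.integrableOn hX.integrableOn, measure_union hAB hB,
    ENNReal.toReal_add (measure_ne_top P A) (measure_ne_top P B)]

end condExpSet

theorem prob_comparison_general {Ω : Type*} [MeasurableSpace Ω] (P : Measure Ω)
    [IsProbabilityMeasure P] (X : Ω → ℝ) (hXi : Integrable X P)
    (μb : ℝ) (D0 D' D'' : Set Ω)
    (hD'm : MeasurableSet D') (hD''m : MeasurableSet D'')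
    (hD' : 0 < P D') (hD'' : 0 < P D'')
    (h01 : Disjoint D0 D') (h02 : Disjoint D0 D'')
    (hge : condExpSet P X D' ≤ condExpSet P X D'')
    (hgt : μb < condExpSet P X D')
    (heq : condExpSet P X (D0 ∪ D') = μb)
    (hle : condExpSet P X (D0 ∪ D'') ≤ μb) :
    P D'' ≤ P D' := by
  have hp₁ : 0 < (P D').toReal := ENNReal.toReal_pos hD'.ne' (measure_ne_top P D')
  have hp₂ : 0 < (P D'').toReal := ENNReal.toReal_pos hD''.ne' (measure_ne_top P D'')
  rw [condExpSet_union hXi h01 hD'm, div_eq_iff (by positivity),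
    setIntegral_eq_condExpSet_mul hD'.ne'] at heq
  rw [condExpSet_union hXi h02 hD''m, div_le_iff₀ (by positivity),
    setIntegral_eq_condExpSet_mul hD''.ne'] at hle
  exact (ENNReal.toReal_le_toReal (measure_ne_top P D'') (measure_ne_top P D')).1
    (le_of_pooled_mean_comparison hp₁.le hge hgt heq hle)

/-- comparison of the probabilities of the last two cells. -/
theorem prob_comparison {Ω : Type*} [MeasurableSpace Ω] (P : Measure Ω)
    [IsProbabilityMeasure P] (X : Ω → ℝ) (hXi : Integrable X P)
    (μb : ℝ) (D0 D' D'' : Set Ω)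
    (hD0m : MeasurableSet D0) (hD'm : MeasurableSet D') (hD''m : MeasurableSet D'')
    (hD0 : 0 < P D0) (hD' : 0 < P D') (hD'' : 0 < P D'')
    (h01 : Disjoint D0 D') (h02 : Disjoint D0 D'') (h12 : Disjoint D' D'')
    (hge : condExpSet P X D' ≤ condExpSet P X D'')
    (hgt : μb < condExpSet P X D')
    (heq : condExpSet P X (D0 ∪ D') = μb)
    (hle : condExpSet P X (D0 ∪ D'') ≤ μb) :
    P D'' ≤ P D' :=
  prob_comparison_general P X hXi μb D0 D' D'' hD'm hD''m hD' hD'' h01 h02 hge hgt heq hle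
end

section
/- Let X be an integrable real-valued random variable on a probability space with nonatomic distribution, L ≤ X ≤ R almost surely, μ_a = E[X], and let μ_b satisfy μ_b < μ_a and P(X < μ_b) > 0, with D_0 = {X < μ_b}. Let m ∈ ℕ and suppose D_0^0, …, D_0^m is a measurable partition of D_0 with P(D_0^j) = P(D_0)/(m+1) and E[X | D_0^j] = E[X | D_0] for every j. Suppose K' ≥ 2 is an integer and μ_b = y_0 ≤ y_1 ≤ … ≤ y_{K'-1} ≤ R are reals such that, with D_i = {y_{i-1} ≤ X < y_i} for 1 ≤ i ≤ K'−1 and D_{K'} = {X ≥ y_{K'-1}}, one has E[X | D_0^j ∪ D_i] = μ_b for every j and every 1 ≤ i ≤ K'−1, and E[X | D_0^j ∪ D_{K'}] ≤ μ_b for every j. Then K' ≤ (m+1)·(μ_a − μ_b)/(P(X ∈ D_0)·(μ_b − E[X | D_0])) + m + 2. -/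
/-!
Put `d = P(D₀⁰) (μ_b - E[X | D₀])`. Since `D₀⁰` carries the conditional mean of `D₀`, the
condition `E[X | D₀⁰ ∪ D_i] = μ_b` says exactly that `∫_{D_i} (X - μ_b) = d` for each of the
`K' - 1` middle cells, while `∫_{D_{K'}} (X - μ_b) ≥ 0` and `∫_{D₀} (X - μ_b) = -(m + 1) d`.
Summing over the partition `D₀, D₁, …, D_{K'}` of `Ω` gives `μ_a - μ_b ≥ (K' - 1 - (m + 1)) d`,
which is the claim because `P(D₀) = (m + 1) P(D₀⁰)`.
-/

open MeasureTheory
open scoped ENNReal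

open Finset

theorem setIntegral_le_eq_sum_add {α E : Type*} [MeasurableSpace α] [NormedAddCommGroup E]
    [NormedSpace ℝ E] {μ : Measure α} {f : α → E} {g : α → ℝ} (hg : Measurable g)
    (hf : Integrable f μ) {y : ℕ → ℝ} {n : ℕ} (hy : MonotoneOn y (Set.Iic n)) :
    ∫ a in {a | y 0 ≤ g a}, f a ∂μ =
      ∑ i ∈ range n, ∫ a in {a | y i ≤ g a ∧ g a < y (i + 1)}, f a ∂μ +
        ∫ a in {a | y n ≤ g a}, f a ∂μ := by
  induction n with
  | zero => simp
  | succ n ih =>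
    have hyn : y n ≤ y (n + 1) := hy (by simp) (by simp) n.le_succ
    have hsplit :
        {a | y n ≤ g a} = {a | y n ≤ g a ∧ g a < y (n + 1)} ∪ {a | y (n + 1) ≤ g a} := by
      ext a
      simp only [Set.mem_ofPred_eq, Set.mem_union]
      constructor
      · intro h
        exact (lt_or_ge (g a) (y (n + 1))).imp (And.intro h) id
      · rintro (h | h)
        exacts [h.1, hyn.trans h]
    have hdisj : Disjoint {a | y n ≤ g a ∧ g a < y (n + 1)} {a | y (n + 1) ≤ g a} :=
      Set.disjoint_left.2 fun a h1 h2 => h1.2.not_ge h2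
    rw [ih (hy.mono (Set.Iic_subset_Iic.2 n.le_succ)), hsplit,
      setIntegral_union hdisj (measurableSet_le measurable_const hg) hf.integrableOn
        hf.integrableOn, sum_range_succ, add_assoc]

section condExpSet

variable {Ω : Type*} [MeasurableSpace Ω] {P : Measure Ω} {X : Ω → ℝ} {A D E : Set Ω} {b : ℝ}

theorem condExpSet_eq_setAverage (P : Measure Ω) (X : Ω → ℝ) (A : Set Ω) :
    condExpSet P X A = ⨍ ω in A, X ω ∂P := by
  rw [condExpSet, setAverage_eq, smul_eq_mul, measureReal_def, div_eq_inv_mul]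

variable [IsFiniteMeasure P]

theorem condExpSet_lt_of_forall_lt (hA : P A ≠ 0) (hX : IntegrableOn X A P)
    (h : ∀ ω ∈ A, X ω < b) : condExpSet P X A < b := by
  by_contra! hb
  obtain ⟨ω, hωA, hω⟩ :=
    nonempty_of_measure_ne_zero (measure_setAverage_le_pos hA (measure_ne_top P A) hX).ne'
  rw [← condExpSet_eq_setAverage] at hω
  exact (h ω hωA).not_ge (hb.trans hω)

theorem measureReal_mul_condExpSet (X : Ω → ℝ) (A : Set Ω) :
    P.real A * condExpSet P X A = ∫ ω in A, X ω ∂P := by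
  rcases eq_or_ne (P.real A) 0 with hA | hA
  · rw [hA, zero_mul,
      setIntegral_measure_zero _ ((measureReal_eq_zero_iff (measure_ne_top P A)).1 hA)]
  · rw [condExpSet, ← measureReal_def, mul_div_cancel₀ _ hA]

theorem setIntegral_sub_const_eq (hX : Integrable X P) (A : Set Ω) (b : ℝ) :
    ∫ ω in A, (X ω - b) ∂P = P.real A * (condExpSet P X A - b) := by
  rw [integral_sub hX.integrableOn (integrableOn_const (measure_ne_top P A)), setIntegral_const,
    smul_eq_mul, mul_sub, measureReal_mul_condExpSet]

theorem setIntegral_sub_const_eq_of_condExpSet_union_eq (hX : Integrable X P)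
    (hDE : Disjoint D E) (hE : MeasurableSet E) (h : condExpSet P X (D ∪ E) = b) :
    ∫ ω in E, (X ω - b) ∂P = P.real D * (b - condExpSet P X D) := by
  have hXb : IntegrableOn (fun ω => X ω - b) (D ∪ E) P :=
    (hX.sub (integrable_const b)).integrableOn
  have hunion := setIntegral_sub_const_eq hX (D ∪ E) b
  rw [h, sub_self, mul_zero, setIntegral_union hDE hE (hXb.mono_set Set.subset_union_left)
    (hXb.mono_set Set.subset_union_right), setIntegral_sub_const_eq hX D b] at hunion
  linarith

theorem natCast_mul_le_setIntegral_sub_of_condExpSet_union_eq (hXm : Measurable X)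
    (hXi : Integrable X P) {y : ℕ → ℝ} {n : ℕ} (hy : MonotoneOn y (Set.Iic n))
    (hD : D ⊆ {ω | X ω < y 0})
    (hcell : ∀ i < n, condExpSet P X (D ∪ {ω | y i ≤ X ω ∧ X ω < y (i + 1)}) = y 0) :
    n * (P.real D * (y 0 - condExpSet P X D)) ≤ ∫ ω in {ω | y 0 ≤ X ω}, (X ω - y 0) ∂P := by
  have hcell_integral : ∀ i ∈ range n, ∫ ω in {ω | y i ≤ X ω ∧ X ω < y (i + 1)}, (X ω - y 0) ∂P =
      P.real D * (y 0 - condExpSet P X D) := by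
    intro i hi
    have hy0i : y 0 ≤ y i := hy (by simp) (by simp [(mem_range.1 hi).le]) (Nat.zero_le i)
    refine setIntegral_sub_const_eq_of_condExpSet_union_eq hXi ?_
      ((measurableSet_le measurable_const hXm).inter (measurableSet_lt hXm measurable_const))
      (hcell i (mem_range.1 hi))
    exact Set.disjoint_left.2 fun ω hωD hωE => (hD hωD).not_ge (hy0i.trans hωE.1)
  have hlast : 0 ≤ ∫ ω in {ω | y n ≤ X ω}, (X ω - y 0) ∂P :=
    setIntegral_nonneg (measurableSet_le measurable_const hXm) fun ω hω =>
      sub_nonneg.2 ((hy (by simp) (by simp) (Nat.zero_le n)).trans hω)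
  rw [setIntegral_le_eq_sum_add (f := fun ω => X ω - y 0) hXm (hXi.sub (integrable_const _)) hy,
    sum_congr rfl hcell_integral, sum_const, card_range, nsmul_eq_mul]
  linarith

end condExpSet

theorem integral_sub_const_eq_add_setIntegral {Ω : Type*} [MeasurableSpace Ω] {P : Measure Ω}
    [IsProbabilityMeasure P] {X : Ω → ℝ} (hXm : Measurable X) (hXi : Integrable X P) (b : ℝ) :
    ∫ ω, X ω ∂P - b = P.real {ω | X ω < b} * (condExpSet P X {ω | X ω < b} - b) +
      ∫ ω in {ω | b ≤ X ω}, (X ω - b) ∂P := by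
  have hcompl : {ω | X ω < b}ᶜ = {ω | b ≤ X ω} := by ext ω; simp
  rw [← setIntegral_sub_const_eq hXi, ← hcompl,
    integral_add_compl (f := fun ω => X ω - b) (measurableSet_lt hXm measurable_const)
      (hXi.sub (integrable_const _)), integral_sub hXi (integrable_const _), integral_const,
    probReal_univ, one_smul]

theorem refined_partition_upper_bound_general {Ω : Type*} [MeasurableSpace Ω] (P : Measure Ω)
    [IsProbabilityMeasure P] (X : Ω → ℝ) (hXm : Measurable X) (hXi : Integrable X P)
    (μa μb : ℝ) (hμa : μa = ∫ ω, X ω ∂P)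
    (hD0 : 0 < P {ω | X ω < μb})
    (m : ℕ) (Dp : Fin (m + 1) → Set Ω)
    (hDpunion : (⋃ j, Dp j) = {ω | X ω < μb})
    (hDpprob : ∀ j, P (Dp j) = P {ω | X ω < μb} / ((m : ℝ≥0∞) + 1))
    (hDpexp : ∀ j, condExpSet P X (Dp j) = condExpSet P X {ω | X ω < μb})
    (K' : ℕ) (y : ℕ → ℝ)
    (hy0 : y 0 = μb)
    (hmono : ∀ i, i + 1 ≤ K' - 1 → y i ≤ y (i + 1))
    (heq : ∀ j, ∀ i, 1 ≤ i → i ≤ K' - 1 →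
      condExpSet P X (Dp j ∪ {ω | y (i - 1) ≤ X ω ∧ X ω < y i}) = μb) :
    (K' : ℝ) ≤ (m + 1) * (μa - μb) /
        ((P {ω | X ω < μb}).toReal * (μb - condExpSet P X {ω | X ω < μb})) + m + 2 := by
  subst hy0
  set n := K' - 1
  set D0 := {ω | X ω < y 0}
  set c := condExpSet P X D0
  have hy : MonotoneOn y (Set.Iic n) :=
    monotoneOn_of_le_succ Set.ordConnected_Iic fun i _ _ hi => hmono i (by simpa using hi)
  have hDp0 : Dp 0 ⊆ D0 := hDpunion ▸ Set.subset_iUnion Dp 0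
  have hP0 : P.real D0 = (m + 1) * P.real (Dp 0) := by
    rw [measureReal_def, measureReal_def, hDpprob 0, ENNReal.toReal_div,
      ENNReal.toReal_add (by simp) (by simp), ENNReal.toReal_natCast, ENNReal.toReal_one]
    field_simp
  have hc : c < y 0 := condExpSet_lt_of_forall_lt hD0.ne' hXi.integrableOn fun ω hω => hω
  have hq : 0 < P.real (Dp 0) := by
    have h := ENNReal.toReal_pos hD0.ne' (measure_ne_top P D0)
    rw [← measureReal_def, hP0] at h
    exact pos_of_mul_pos_right h (by positivity)
  have hcells : n * (P.real (Dp 0) * (y 0 - c)) ≤ ∫ ω in {ω | y 0 ≤ X ω}, (X ω - y 0) ∂P := by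
    have h := natCast_mul_le_setIntegral_sub_of_condExpSet_union_eq hXm hXi hy hDp0
      fun i hi => by simpa using heq 0 (i + 1) (by omega) (by omega)
    rwa [hDpexp 0] at h
  have htotal := hμa ▸ integral_sub_const_eq_add_setIntegral hXm hXi (y 0)
  have hK' : (K' : ℝ) ≤ n + 1 := by exact_mod_cast (by omega : K' ≤ n + 1)
  have hbound : ((n : ℝ) - m - 1) * (P.real (Dp 0) * (y 0 - c)) ≤ μa - y 0 := by
    rw [htotal, hP0]
    linarith
  change (K' : ℝ) ≤ (m + 1) * (μa - y 0) / (P.real D0 * (y 0 - c)) + m + 2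
  rw [hP0, mul_assoc, mul_div_mul_left _ _ (by positivity)]
  linarith [(le_div_iff₀ (mul_pos hq (sub_pos.2 hc))).2 hbound]

/-- upper bound on `K'`, the number of cells of the refined partition used by
the High Visibility Mechanism (Lemma 3). -/
theorem refined_partition_upper_bound {Ω : Type*} [MeasurableSpace Ω] (P : Measure Ω)
    [IsProbabilityMeasure P] (X : Ω → ℝ) (hXm : Measurable X) (hXi : Integrable X P)
    (hna : ∀ r : ℝ, P (X ⁻¹' {r}) = 0)
    (L R : ℝ) (hLR : L < R) (hbdd : ∀ᵐ ω ∂P, L ≤ X ω ∧ X ω ≤ R)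
    (μa μb : ℝ) (hμa : μa = ∫ ω, X ω ∂P) (hμab : μb < μa)
    (hD0 : 0 < P {ω | X ω < μb})
    (m : ℕ) (Dp : Fin (m + 1) → Set Ω)
    (hDpm : ∀ j, MeasurableSet (Dp j))
    (hDpdisj : Pairwise fun i j => Disjoint (Dp i) (Dp j))
    (hDpunion : (⋃ j, Dp j) = {ω | X ω < μb})
    (hDpprob : ∀ j, P (Dp j) = P {ω | X ω < μb} / ((m : ℝ≥0∞) + 1))
    (hDpexp : ∀ j, condExpSet P X (Dp j) = condExpSet P X {ω | X ω < μb})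
    (K' : ℕ) (hK' : 2 ≤ K') (y : ℕ → ℝ)
    (hy0 : y 0 = μb)
    (hmono : ∀ i, i + 1 ≤ K' - 1 → y i ≤ y (i + 1))
    (hyR : y (K' - 1) ≤ R)
    (heq : ∀ j, ∀ i, 1 ≤ i → i ≤ K' - 1 →
      condExpSet P X (Dp j ∪ {ω | y (i - 1) ≤ X ω ∧ X ω < y i}) = μb)
    (hlast : ∀ j, condExpSet P X (Dp j ∪ {ω | y (K' - 1) ≤ X ω}) ≤ μb) :
    (K' : ℝ) ≤ (m + 1) * (μa - μb) /
        ((P {ω | X ω < μb}).toReal * (μb - condExpSet P X {ω | X ω < μb})) + m + 2 :=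
  refined_partition_upper_bound_general P X hXm hXi μa μb hμa hD0 m Dp hDpunion hDpprob hDpexp K' y
    hy0 hmono heq
end

section
/- Let X be an integrable real-valued random variable on a probability space whose distribution is nonatomic, let μ_b be a real number with P(X < μ_b) > 0, and let D_0 = {X < μ_b}. Then for every m ∈ ℕ there exists a measurable partition D_0^0, …, D_0^m of the event D_0 such that for every j, P(D_0^j) = P(D_0)/(m+1) and E[X·1_{D_0^j}] = E[X·1_{D_0}]/(m+1) (equivalently, E[X | D_0^j] = E[X | D_0]). -/
/-!
Push `X`, restricted to `D₀`, forward to its law `ν` and sweep through `ν` by the sets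
`{x | ν (-∞, x) < t}`: as `ν` has no atoms, such a set has mass exactly `t`, and each of its
points lies to the left of every point outside it. In this mass coordinate, a slab `[a, b)` is
split into `n + 1` pieces by cutting off `[a, a + θ) ∪ [b - q + θ, b)` with
`q = (b - a) / (n + 1)`. For `θ = 0` this is the top slab, whose mean is at least that of
`[a, b)`; for `θ = q` it is the bottom slab, whose mean is at most that. The integral over it is
continuous in `θ`, so some `θ` gives exactly the share `1 / (n + 1)` of the integral, and the
remainder `[a + θ, b - q + θ)` is again a slab.
-/

open MeasureTheory
open scoped ENNReal

section EqualSplit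

open Set Filter Topology

theorem pairwise_disjoint_fin_cons {β : Type*} {n : ℕ} {s : Set β} {t : Fin n → Set β}
    (hs : ∀ j, Disjoint s (t j)) (ht : Pairwise fun i j => Disjoint (t i) (t j)) :
    Pairwise fun i j => Disjoint ((Fin.cons s t : Fin (n + 1) → Set β) i)
      ((Fin.cons s t : Fin (n + 1) → Set β) j) := by
  intro i j hij
  induction i using Fin.cases <;> induction j using Fin.cases
  · exact absurd rfl hij
  · simpa using hs _
  · simpa using (hs _).symm
  · simpa using ht (ne_of_apply_ne Fin.succ hij)

theorem sdiff_union_sdiff_union_sdiff {β : Type*} {s₁ s₂ s₃ t : Set β} (h₁₂ : s₁ ⊆ s₂)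
    (h₂₃ : s₂ ⊆ s₃) (h₃ : s₃ ⊆ t) : (s₂ \ s₁) ∪ (t \ s₃) ∪ (s₃ \ s₂) = t \ s₁ := by
  ext x
  simp only [mem_union, Set.mem_sdiff]
  have := @h₁₂ x; have := @h₂₃ x; have := @h₃ x
  tauto

variable {α : Type*} [MeasurableSpace α]

theorem mul_setIntegral_le_mul_setIntegral {μ : Measure α} [IsFiniteMeasure μ] {f : α → ℝ}
    (hf : Integrable f μ) {A B : Set α} (hA : MeasurableSet A) (hB : MeasurableSet B)
    (hAB : ∀ x ∈ A, ∀ y ∈ B, f x ≤ f y) :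
    μ.real B * ∫ x in A, f x ∂μ ≤ μ.real A * ∫ x in B, f x ∂μ := by
  rcases A.eq_empty_or_nonempty with rfl | hAne
  · simp
  rcases B.eq_empty_or_nonempty with rfl | ⟨y₀, hy₀⟩
  · simp
  have hbdd : BddAbove (f '' A) := ⟨f y₀, forall_mem_image.2 fun x hx => hAB x hx y₀ hy₀⟩
  set c := sSup (f '' A)
  have hAc : ∫ x in A, f x ∂μ ≤ μ.real A * c := by
    simpa [setIntegral_const, mul_comm] using setIntegral_mono_on hf.integrableOn
      (integrableOn_const (measure_ne_top μ A)) hA fun x hx => le_csSup hbdd (mem_image_of_mem f hx)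
  have hcB : μ.real B * c ≤ ∫ x in B, f x ∂μ := by
    simpa [mul_comm] using setIntegral_ge_of_const_le_real hB (measure_ne_top μ B)
      (fun y hy => csSup_le (hAne.image f) (forall_mem_image.2 fun x hx => hAB x hx y hy))
      hf.integrableOn
  calc μ.real B * ∫ x in A, f x ∂μ ≤ μ.real B * (μ.real A * c) := by gcongr
    _ = μ.real A * (μ.real B * c) := by ring
    _ ≤ μ.real A * ∫ x in B, f x ∂μ := by gcongr

theorem setIntegral_sdiff_add_setIntegral_sdiff {μ : Measure α} {f : α → ℝ} {s t u : Set α}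
    (hs : MeasurableSet s) (ht : MeasurableSet t) (hst : s ⊆ t) (htu : t ⊆ u)
    (hf : IntegrableOn f u μ) :
    ∫ x in t \ s, f x ∂μ + ∫ x in u \ t, f x ∂μ = ∫ x in u \ s, f x ∂μ := by
  rw [setIntegral_sdiff hs (hf.mono_set htu) hst, setIntegral_sdiff ht hf htu,
    setIntegral_sdiff hs hf (hst.trans htu)]
  ring

structure IsEquipartition (μ : Measure α) (f : α → ℝ) (U : Set α) {k : ℕ} (B : Fin k → Set α) :
    Prop where
  measurableSet : ∀ j, MeasurableSet (B j)
  pairwise_disjoint : Pairwise fun i j => Disjoint (B i) (B j)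
  iUnion_eq : ⋃ j, B j = U
  measureReal_eq : ∀ j, μ.real (B j) = μ.real U / k
  setIntegral_eq : ∀ j, ∫ x in B j, f x ∂μ = (∫ x in U, f x ∂μ) / k

namespace IsEquipartition

variable {μ : Measure α} {f : α → ℝ} {U : Set α} {k : ℕ} {B : Fin k → Set α}

theorem single (hU : MeasurableSet U) : IsEquipartition μ f U fun _ : Fin 1 => U where
  measurableSet _ := hU
  pairwise_disjoint i j hij := (hij (Subsingleton.elim (α := Fin 1) i j)).elim
  iUnion_eq := iUnion_const U
  measureReal_eq _ := by simp
  setIntegral_eq _ := by simp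

theorem cons [IsFiniteMeasure μ] (hB : IsEquipartition μ f U B) (hf : Integrable f μ)
    {B₀ : Set α} (hB₀ : MeasurableSet B₀) (hdisj : Disjoint B₀ U)
    (hμ : μ.real B₀ = μ.real (B₀ ∪ U) / (k + 1))
    (hint : ∫ x in B₀, f x ∂μ = (∫ x in B₀ ∪ U, f x ∂μ) / (k + 1)) :
    IsEquipartition μ f (B₀ ∪ U) (Fin.cons B₀ B : Fin (k + 1) → Set α) := by
  have hU : MeasurableSet U := hB.iUnion_eq ▸ MeasurableSet.iUnion hB.measurableSet
  refine ⟨Fin.forall_fin_succ.2 ⟨hB₀, hB.measurableSet⟩,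
    pairwise_disjoint_fin_cons (fun j => hdisj.mono_right (hB.iUnion_eq ▸ subset_iUnion B j))
      hB.pairwise_disjoint, ?_, Fin.forall_fin_succ.2 ⟨?_, fun j => ?_⟩,
    Fin.forall_fin_succ.2 ⟨?_, fun j => ?_⟩⟩
  · rw [← hB.iUnion_eq]
    ext x
    simp
  · simpa using hμ
  · have hk : (0 : ℝ) < k := by exact_mod_cast j.pos
    rw [measureReal_union hdisj hU] at hμ
    rw [Fin.cons_succ, hB.measureReal_eq j, measureReal_union hdisj hU]
    push_cast
    field_simp at hμ ⊢
    linarith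
  · simpa using hint
  · have hk : (0 : ℝ) < k := by exact_mod_cast j.pos
    rw [setIntegral_union hdisj hU hf.integrableOn hf.integrableOn] at hint
    rw [Fin.cons_succ, hB.setIntegral_eq j, setIntegral_union hdisj hU hf.integrableOn
      hf.integrableOn]
    push_cast
    field_simp at hint ⊢
    linarith

theorem measure_eq [IsFiniteMeasure μ] (hB : IsEquipartition μ f U B) (j : Fin k) :
    μ (B j) = μ U / k := by
  rw [← ofReal_measureReal, hB.measureReal_eq j,
    ENNReal.ofReal_div_of_pos (by exact_mod_cast j.pos), ofReal_measureReal,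
    ENNReal.ofReal_natCast]

theorem inter_of_restrict {D : Set α} (hD : MeasurableSet D)
    (hB : IsEquipartition (μ.restrict D) f univ B) :
    IsEquipartition μ f D fun j => B j ∩ D where
  measurableSet j := (hB.measurableSet j).inter hD
  pairwise_disjoint _ _ hij := (hB.pairwise_disjoint hij).mono inter_subset_left inter_subset_left
  iUnion_eq := by rw [← iUnion_inter, hB.iUnion_eq, univ_inter]
  measureReal_eq j := by
    rw [← measureReal_restrict_apply (hB.measurableSet j), hB.measureReal_eq j,
      measureReal_restrict_apply_univ]
  setIntegral_eq j := by
    rw [← Measure.restrict_restrict (hB.measurableSet j), hB.setIntegral_eq j,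
      Measure.restrict_univ]

end IsEquipartition

structure IsOrderedSweep (μ : Measure α) (f : α → ℝ) (S : ℝ → Set α) (p : ℝ) : Prop where
  monotone : Monotone S
  measurableSet : ∀ t, MeasurableSet (S t)
  measureReal_eq : ∀ t ∈ Icc 0 p, μ.real (S t) = t
  le_of_mem_of_notMem : ∀ t, ∀ x ∈ S t, ∀ y ∉ S t, f x ≤ f y

namespace IsOrderedSweep

variable {μ : Measure α} [IsFiniteMeasure μ] {f : α → ℝ} {S : ℝ → Set α} {p : ℝ}

theorem measureReal_sdiff (hS : IsOrderedSweep μ f S p) {c b : ℝ} {T : Set α}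
    (hc : c ∈ Icc 0 p) (hcb : c ≤ b) (hbT : S b ⊆ T) (hTb : μ.real T = b) :
    μ.real (T \ S c) = b - c := by
  rw [MeasureTheory.measureReal_sdiff ((hS.monotone hcb).trans hbT) (hS.measurableSet c), hTb,
    hS.measureReal_eq c hc]

theorem measure_sdiff (hS : IsOrderedSweep μ f S p) {s t : ℝ} (hs : s ∈ Icc 0 p)
    (ht : t ∈ Icc 0 p) : μ (S s \ S t) = ENNReal.ofReal (s - t) := by
  rcases le_total s t with hst | hts
  · rw [sdiff_eq_empty.2 (hS.monotone hst), measure_empty, ENNReal.ofReal_of_nonpos (by linarith)]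
  · rw [← ofReal_measureReal, hS.measureReal_sdiff ht hts subset_rfl (hS.measureReal_eq s hs)]

theorem continuousOn_setIntegral (hS : IsOrderedSweep μ f S p) (hf : Integrable f μ) :
    ContinuousOn (fun t => ∫ x in S t, f x ∂μ) (Icc 0 p) := by
  intro t ht
  have hsdiff : ∀ s, ∫ x in S s, f x ∂μ =
      ∫ x in S t, f x ∂μ + ∫ x in S s \ S t, f x ∂μ - ∫ x in S t \ S s, f x ∂μ := by
    intro s
    rw [← integral_inter_add_sdiff (hS.measurableSet t) hf.integrableOn,
      ← integral_inter_add_sdiff (hS.measurableSet s) hf.integrableOn (s := S t), inter_comm]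
    ring
  have hlim : ∀ g : ℝ → ℝ, Continuous g → g t = 0 →
      Tendsto (fun s => ENNReal.ofReal (g s)) (𝓝[Icc 0 p] t) (𝓝 0) := fun g hg hgt => by
    simpa [hgt, Function.comp_def] using
      ((ENNReal.continuous_ofReal.comp hg).tendsto t).mono_left nhdsWithin_le_nhds
  have h₁ : Tendsto (fun s => ∫ x in S s \ S t, f x ∂μ) (𝓝[Icc 0 p] t) (𝓝 0) :=
    hf.tendsto_setIntegral_nhds_zero <| (hlim _ (continuous_sub_right t) (sub_self t)).congr'
      (eventually_nhdsWithin_of_forall fun s hs => (hS.measure_sdiff hs ht).symm)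
  have h₂ : Tendsto (fun s => ∫ x in S t \ S s, f x ∂μ) (𝓝[Icc 0 p] t) (𝓝 0) :=
    hf.tendsto_setIntegral_nhds_zero <| (hlim _ (continuous_sub_left t) (sub_self t)).congr'
      (eventually_nhdsWithin_of_forall fun s hs => (hS.measure_sdiff ht hs).symm)
  have h := ((tendsto_const_nhds (x := ∫ x in S t, f x ∂μ)).add h₁).sub h₂
  rw [add_zero, sub_zero] at h
  exact h.congr fun s => (hsdiff s).symm

theorem mul_setIntegral_sdiff_le (hS : IsOrderedSweep μ f S p) (hf : Integrable f μ)
    {a c b : ℝ} {T : Set α} (ha : 0 ≤ a) (hac : a ≤ c) (hcb : c ≤ b) (hb : b ≤ p)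
    (hT : MeasurableSet T) (hbT : S b ⊆ T) (hTb : μ.real T = b) :
    (b - c) * ∫ x in S c \ S a, f x ∂μ ≤ (c - a) * ∫ x in T \ S c, f x ∂μ := by
  have h := mul_setIntegral_le_mul_setIntegral hf ((hS.measurableSet c).diff (hS.measurableSet a))
    (hT.diff (hS.measurableSet c)) fun x hx y hy => hS.le_of_mem_of_notMem c x hx.1 y hy.2
  rwa [hS.measureReal_sdiff ⟨ha.trans hac, hcb.trans hb⟩ hcb hbT hTb,
    hS.measureReal_sdiff ⟨ha, hac.trans (hcb.trans hb)⟩ hac subset_rfl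
      (hS.measureReal_eq c ⟨ha.trans hac, hcb.trans hb⟩)] at h

theorem setIntegral_bottom_le (hS : IsOrderedSweep μ f S p) (hf : Integrable f μ)
    {a b q N : ℝ} {T : Set α} (ha : 0 ≤ a) (hb : b ≤ p) (hT : MeasurableSet T) (hbT : S b ⊆ T)
    (hTb : μ.real T = b) (hN : 1 ≤ N) (hq : N * q = b - a) (hqpos : 0 < q) :
    ∫ x in S (a + q) \ S a, f x ∂μ ≤ (∫ x in T \ S a, f x ∂μ) / N := by
  have hslab := hS.mul_setIntegral_sdiff_le hf (c := a + q) ha (by linarith) (by nlinarith) hb hT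
    hbT hTb
  have hsplit := setIntegral_sdiff_add_setIntegral_sdiff (hS.measurableSet a)
    (hS.measurableSet (a + q)) (hS.monotone (by linarith))
    ((hS.monotone (by nlinarith : a + q ≤ b)).trans hbT) hf.integrableOn
  rw [le_div_iff₀ (by linarith)]
  refine le_of_mul_le_mul_left ?_ hqpos
  linear_combination hslab + (∫ x in S (a + q) \ S a, f x ∂μ) * hq + q * hsplit

theorem le_setIntegral_top (hS : IsOrderedSweep μ f S p) (hf : Integrable f μ)
    {a b q N : ℝ} {T : Set α} (ha : 0 ≤ a) (hb : b ≤ p) (hT : MeasurableSet T) (hbT : S b ⊆ T)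
    (hTb : μ.real T = b) (hN : 1 ≤ N) (hq : N * q = b - a) (hqpos : 0 < q) :
    (∫ x in T \ S a, f x ∂μ) / N ≤ ∫ x in T \ S (b - q), f x ∂μ := by
  have hslab := hS.mul_setIntegral_sdiff_le hf (c := b - q) ha (by nlinarith) (by linarith) hb hT
    hbT hTb
  have hsplit := setIntegral_sdiff_add_setIntegral_sdiff (hS.measurableSet a)
    (hS.measurableSet (b - q)) (hS.monotone (by nlinarith))
    ((hS.monotone (by linarith : b - q ≤ b)).trans hbT) hf.integrableOn
  rw [div_le_iff₀ (by linarith)]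
  refine le_of_mul_le_mul_left ?_ hqpos
  linear_combination hslab - (∫ x in T \ S (b - q), f x ∂μ) * hq - q * hsplit

theorem exists_setIntegral_union_eq (hS : IsOrderedSweep μ f S p) (hf : Integrable f μ)
    {a b q N : ℝ} {T : Set α} (ha : 0 ≤ a) (hab : a ≤ b) (hb : b ≤ p)
    (hT : MeasurableSet T) (hbT : S b ⊆ T) (hTb : μ.real T = b) (hN : 1 ≤ N) (hq : N * q = b - a) :
    ∃ θ ∈ Icc 0 q, ∫ x in (S (a + θ) \ S a) ∪ (T \ S (b - q + θ)), f x ∂μ =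
      (∫ x in T \ S a, f x ∂μ) / N := by
  set g := fun t => ∫ x in S t, f x ∂μ
  set G := ∫ x in T, f x ∂μ
  have hq0 : 0 ≤ q := by nlinarith
  have hqba : q ≤ b - a := by nlinarith
  have hIcc : ∀ {t}, a ≤ t → t ≤ b → t ∈ Icc 0 p := fun h₁ h₂ => ⟨ha.trans h₁, h₂.trans hb⟩
  have hS_sdiff : ∀ {s t}, s ≤ t → ∫ x in S t \ S s, f x ∂μ = g t - g s := fun hst =>
    setIntegral_sdiff (hS.measurableSet _) hf.integrableOn (hS.monotone hst)
  have hT_sdiff : ∀ {t}, t ≤ b → ∫ x in T \ S t, f x ∂μ = G - g t := fun htb =>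
    setIntegral_sdiff (hS.measurableSet _) hf.integrableOn ((hS.monotone htb).trans hbT)
  have hGb : G = g b := by
    have hnull : μ (T \ S b) = 0 := by
      rw [← ofReal_measureReal, hS.measureReal_sdiff (hIcc hab le_rfl) le_rfl hbT hTb, sub_self,
        ENNReal.ofReal_zero]
    linarith [hT_sdiff le_rfl, setIntegral_measure_zero f hnull]
  set h := fun θ => (g (a + θ) - g a) + (G - g (b - q + θ))
  have hcont : ContinuousOn h (Icc 0 q) := by
    have hg := hS.continuousOn_setIntegral hf
    refine ((hg.comp (continuous_const_add a).continuousOn ?_).sub continuousOn_const).add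
      (continuousOn_const.sub (hg.comp (continuous_const_add (b - q)).continuousOn ?_))
    · exact fun θ hθ => hIcc (by linarith [hθ.1]) (by linarith [hθ.2])
    · exact fun θ hθ => hIcc (by linarith [hθ.1]) (by linarith [hθ.2])
  rcases hq0.eq_or_lt with rfl | hqpos
  · obtain rfl : b = a := by linarith [hq, mul_zero N]
    refine ⟨0, left_mem_Icc.2 le_rfl, ?_⟩
    simp only [add_zero, sub_zero, Set.sdiff_self, empty_union]
    rw [hT_sdiff le_rfl, hGb, sub_self, zero_div]
  have hlow : h q ≤ (G - g a) / N := by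
    have hbottom := hS.setIntegral_bottom_le hf ha hb hT hbT hTb hN hq hqpos
    rw [hS_sdiff (by linarith), hT_sdiff hab] at hbottom
    simpa only [h, sub_add_cancel, hGb, sub_self, add_zero] using hbottom
  have hup : (G - g a) / N ≤ h 0 := by
    have htop := hS.le_setIntegral_top hf ha hb hT hbT hTb hN hq hqpos
    rw [hT_sdiff hab, hT_sdiff (by linarith)] at htop
    simpa only [h, add_zero, sub_self, zero_add] using htop
  obtain ⟨θ, hθ, hθeq⟩ := intermediate_value_Icc' hq0 hcont ⟨hlow, hup⟩
  refine ⟨θ, hθ, ?_⟩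
  have hdisj : Disjoint (S (a + θ) \ S a) (T \ S (b - q + θ)) :=
    disjoint_sdiff_right.mono_left (sdiff_subset.trans (hS.monotone (by linarith)))
  rw [setIntegral_union hdisj (hT.diff (hS.measurableSet _)) hf.integrableOn hf.integrableOn,
    hS_sdiff (by linarith [hθ.1]), hT_sdiff (by linarith [hθ.2]), hT_sdiff hab]
  exact hθeq

/-- `T` may exceed `S b` by a null set, as `S p` may miss a null set of the whole space. -/
theorem exists_isEquipartition_sdiff (hS : IsOrderedSweep μ f S p) (hf : Integrable f μ)
    (n : ℕ) {a b : ℝ} {T : Set α} (ha : 0 ≤ a) (hab : a ≤ b) (hb : b ≤ p) (hT : MeasurableSet T)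
    (hbT : S b ⊆ T) (hTb : μ.real T = b) :
    ∃ B : Fin (n + 1) → Set α, IsEquipartition μ f (T \ S a) B := by
  induction n generalizing a b T with
  | zero => exact ⟨_, IsEquipartition.single (hT.diff (hS.measurableSet a))⟩
  | succ n ih =>
    set q := (b - a) / (n + 2)
    have hn : (0 : ℝ) ≤ n := n.cast_nonneg
    obtain ⟨θ, ⟨hθ0, hθq⟩, hθ⟩ := hS.exists_setIntegral_union_eq hf (N := n + 2) (q := q) ha hab
      hb hT hbT hTb (by linarith) (by simp only [q]; field_simp)
    have hqba : q ≤ b - a := div_le_self (by linarith) (by linarith)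
    have hIcc : ∀ {t}, a ≤ t → t ≤ b → t ∈ Icc 0 p := fun h₁ h₂ => ⟨ha.trans h₁, h₂.trans hb⟩
    obtain ⟨B, hB⟩ := ih (a := a + θ) (b := b - q + θ) (T := S (b - q + θ)) (by linarith)
      (by linarith) (by linarith) (hS.measurableSet _) subset_rfl
      (hS.measureReal_eq _ (hIcc (by linarith) (by linarith)))
    set B₀ := (S (a + θ) \ S a) ∪ (T \ S (b - q + θ))
    have hmono : S (a + θ) ⊆ S (b - q + θ) := hS.monotone (by linarith)
    have hunion : B₀ ∪ (S (b - q + θ) \ S (a + θ)) = T \ S a :=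
      sdiff_union_sdiff_union_sdiff (hS.monotone (by linarith)) hmono
        ((hS.monotone (by linarith)).trans hbT)
    have hB₀μ : μ.real B₀ = q := by
      rw [measureReal_union (disjoint_sdiff_right.mono_left (sdiff_subset.trans hmono))
        (hT.diff (hS.measurableSet _)),
        hS.measureReal_sdiff (b := a + θ) (hIcc le_rfl hab) (by linarith) subset_rfl
          (hS.measureReal_eq _ (hIcc (by linarith) (by linarith))),
        hS.measureReal_sdiff (c := b - q + θ) (hIcc (by linarith) (by linarith)) (by linarith) hbT
          hTb]
      ring
    rw [← hunion]
    refine ⟨_, hB.cons hf (((hS.measurableSet _).diff (hS.measurableSet _)).union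
      (hT.diff (hS.measurableSet _))) (disjoint_union_left.2
        ⟨disjoint_sdiff_right.mono_left sdiff_subset, disjoint_sdiff_left.mono_right sdiff_subset⟩)
      ?_ ?_⟩
    · rw [hunion, hS.measureReal_sdiff (hIcc le_rfl hab) hab hbT hTb, hB₀μ]
      push_cast
      ring
    · rw [hunion, hθ]
      push_cast
      ring

end IsOrderedSweep

theorem IsOrderedSweep.preimage {β : Type*} [MeasurableSpace β] {μ : Measure α} {X : α → β}
    (hX : Measurable X) {f : β → ℝ} {S : ℝ → Set β} {p : ℝ} (hS : IsOrderedSweep (μ.map X) f S p) :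
    IsOrderedSweep μ (fun x => f (X x)) (fun t => X ⁻¹' S t) p where
  monotone _ _ hst := preimage_mono (hS.monotone hst)
  measurableSet t := hX (hS.measurableSet t)
  measureReal_eq t ht := by
    rw [← map_measureReal_apply hX (hS.measurableSet t), hS.measureReal_eq t ht]
  le_of_mem_of_notMem t x hx y hy := hS.le_of_mem_of_notMem t (X x) hx (X y) hy

section RealLine

variable (ν : Measure ℝ)

def massSublevel (t : ℝ) : Set ℝ := {x | ν.real (Iio x) < t}

theorem massSublevel_zero : massSublevel ν 0 = ∅ :=
  eq_empty_of_forall_notMem fun _ hx => measureReal_nonneg.not_gt hx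

variable [IsFiniteMeasure ν]

theorem tendsto_measureReal_Iio_atBot : Tendsto (fun x => ν.real (Iio x)) atBot (𝓝 0) := by
  have h := tendsto_measure_iInter_atBot (μ := ν) (fun x => measurableSet_Iio.nullMeasurableSet)
    (fun _ _ hxy => Iio_subset_Iio hxy) ⟨0, measure_ne_top ν _⟩
  rw [iInter_Iio_of_not_bddBelow_range (by simp [not_bddBelow_univ]), measure_empty] at h
  exact (ENNReal.tendsto_toReal ENNReal.zero_ne_top).comp h

theorem tendsto_measureReal_Iio_atTop :
    Tendsto (fun x => ν.real (Iio x)) atTop (𝓝 (ν.real univ)) := by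
  have h := tendsto_measure_iUnion_atTop (μ := ν) (monotone_Iio (α := ℝ))
  rw [iUnion_Iio] at h
  exact (ENNReal.tendsto_toReal (measure_ne_top ν _)).comp h

theorem continuous_measureReal_Iio [NullSingletonClass ν] : Continuous fun x => ν.real (Iio x) := by
  refine continuous_iff_continuousAt.2 fun x => ?_
  have hsdiff : ∀ {y z : ℝ}, y ≤ z → ν.real (Iio z) - ν.real (Iio y) ≤ ν.real (Icc y z) := by
    intro y z hyz
    rw [← measureReal_sdiff (Iio_subset_Iio hyz) measurableSet_Iio]
    exact measureReal_mono fun w ⟨hwz, hwy⟩ => ⟨not_lt.1 hwy, hwz.le⟩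
  have hbound : ∀ y, |ν.real (Iio y) - ν.real (Iio x)| ≤
      ν.real (Icc (x - |y - x|) (x + |y - x|)) := by
    intro y
    rcases le_total x y with h | h
    · rw [abs_of_nonneg (sub_nonneg.2 (measureReal_mono (Iio_subset_Iio h)))]
      refine (hsdiff h).trans (measureReal_mono (Icc_subset_Icc ?_ ?_)) <;>
        linarith [abs_nonneg (y - x), le_abs_self (y - x)]
    · rw [abs_sub_comm, abs_of_nonneg (sub_nonneg.2 (measureReal_mono (Iio_subset_Iio h)))]
      refine (hsdiff h).trans (measureReal_mono (Icc_subset_Icc ?_ ?_)) <;>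
        linarith [abs_nonneg (y - x), neg_abs_le (y - x)]
  have hlim : Tendsto (fun y => ν.real (Icc (x - |y - x|) (x + |y - x|))) (𝓝 x) (𝓝 0) := by
    have h0 : Tendsto (fun y : ℝ => |y - x|) (𝓝 x) (𝓝 0) := by
      simpa using ((continuous_id.sub continuous_const).abs.tendsto (f := fun y : ℝ => |y - x|) x)
    exact ((ENNReal.tendsto_toReal ENNReal.zero_ne_top).comp (tendsto_measure_Icc ν x)).comp h0
  rw [ContinuousAt, tendsto_iff_norm_sub_tendsto_zero]
  exact squeeze_zero (fun _ => norm_nonneg _) hbound hlim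

theorem measureReal_massSublevel [NullSingletonClass ν] {t : ℝ} (ht : t ∈ Icc 0 (ν.real univ)) :
    ν.real (massSublevel ν t) = t := by
  obtain ⟨ht0, htp⟩ := ht
  rcases ht0.eq_or_lt with rfl | ht0
  · simp [massSublevel_zero]
  set K := {y | t ≤ ν.real (Iio y)}
  rcases K.eq_empty_or_nonempty with hK | hK
  · have huniv : massSublevel ν t = univ :=
      eq_univ_of_forall fun y => show ν.real (Iio y) < t from not_le.1 fun hy => hK.subset hy
    rw [huniv]
    exact le_antisymm (le_of_tendsto' (tendsto_measureReal_Iio_atTop ν)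
      fun y => (huniv ▸ mem_univ y : y ∈ massSublevel ν t).le) htp
  have hbdd : BddBelow K := by
    obtain ⟨y₀, hy₀⟩ := ((tendsto_measureReal_Iio_atBot ν).eventually
      (gt_mem_nhds ht0)).exists_forall_of_atBot
    exact ⟨y₀, fun y hy => le_of_not_gt fun hlt => (hy₀ y hlt.le).not_ge hy⟩
  have hcont := continuous_measureReal_Iio ν
  have hs : t ≤ ν.real (Iio (sInf K)) :=
    IsClosed.csInf_mem (isClosed_le continuous_const hcont) hK hbdd
  have hlt : ∀ y < sInf K, ν.real (Iio y) < t := fun y hy =>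
    not_le.1 (notMem_of_lt_csInf hy hbdd : y ∉ K)
  have hIio : massSublevel ν t = Iio (sInf K) := by
    ext x
    refine ⟨fun hx => mem_Iio.2 (not_le.1 fun hsx => ?_), hlt x⟩
    exact (hs.trans (measureReal_mono (Iio_subset_Iio hsx))).not_gt hx
  rw [hIio]
  refine le_antisymm ?_ hs
  exact le_of_tendsto
    (hcont.continuousAt.tendsto.mono_left (nhdsWithin_le_nhds (s := Iio (sInf K))))
    (eventually_nhdsWithin_of_forall fun y hy => (hlt y hy).le)

theorem isOrderedSweep_massSublevel [NullSingletonClass ν] :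
    IsOrderedSweep ν (fun x => x) (massSublevel ν) (ν.real univ) where
  monotone _ _ hst _ hx := lt_of_lt_of_le hx hst
  measurableSet _ := measurableSet_lt
    (Monotone.measurable fun _ _ hxy => measureReal_mono (Iio_subset_Iio hxy)) measurable_const
  measureReal_eq _ ht := measureReal_massSublevel ν ht
  le_of_mem_of_notMem _ _ hx _ hy := le_of_not_gt fun hyx =>
    hy (lt_of_le_of_lt (measureReal_mono (Iio_subset_Iio hyx.le)) hx)

end RealLine

theorem exists_isEquipartition_univ {μ : Measure α} [IsFiniteMeasure μ] {X : α → ℝ}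
    (hX : Measurable X) (hXi : Integrable X μ) (hX₀ : ∀ r, μ (X ⁻¹' {r}) = 0) (n : ℕ) :
    ∃ B : Fin (n + 1) → Set α, IsEquipartition μ X univ B := by
  have : NullSingletonClass (μ.map X) :=
    ⟨fun r => by rw [Measure.map_apply hX (measurableSet_singleton r)]; exact hX₀ r⟩
  have hS := (isOrderedSweep_massSublevel (μ.map X)).preimage hX
  rw [map_measureReal_apply hX MeasurableSet.univ, preimage_univ] at hS
  obtain ⟨B, hB⟩ := hS.exists_isEquipartition_sdiff hXi n le_rfl measureReal_nonneg le_rfl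
    MeasurableSet.univ (subset_univ _) rfl
  rw [massSublevel_zero, preimage_empty, sdiff_empty] at hB
  exact ⟨B, hB⟩

end EqualSplit

theorem exists_equal_split_general {Ω : Type*} [MeasurableSpace Ω] (P : Measure Ω)
    [IsProbabilityMeasure P] (X : Ω → ℝ) (hXm : Measurable X) (hXi : Integrable X P)
    (hna : ∀ r : ℝ, P (X ⁻¹' {r}) = 0)
    (μb : ℝ) (m : ℕ) :
    ∃ Dp : Fin (m + 1) → Set Ω,
      (∀ j, MeasurableSet (Dp j)) ∧
      (Pairwise fun i j => Disjoint (Dp i) (Dp j)) ∧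
      (⋃ j, Dp j) = {ω | X ω < μb} ∧
      (∀ j, P (Dp j) = P {ω | X ω < μb} / ((m : ℝ≥0∞) + 1)) ∧
      (∀ j, (∫ ω in Dp j, X ω ∂P) = (∫ ω in {ω | X ω < μb}, X ω ∂P) / (m + 1)) := by
  have hD : MeasurableSet {ω | X ω < μb} := measurableSet_lt hXm measurable_const
  obtain ⟨B, hB⟩ := exists_isEquipartition_univ (μ := P.restrict {ω | X ω < μb}) hXm
    hXi.restrict (fun r => le_zero_iff.1 ((Measure.restrict_apply_le _ _).trans_eq (hna r))) m
  have hBD := hB.inter_of_restrict hD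
  exact ⟨_, hBD.measurableSet, hBD.pairwise_disjoint, hBD.iUnion_eq,
    fun j => by exact_mod_cast hBD.measure_eq j, fun j => by exact_mod_cast hBD.setIntegral_eq j⟩

/-- the event `D₀ = {X < μ_b}` can be split into `m+1` measurable pieces of
equal probability and equal contribution to the expectation. -/
theorem exists_equal_split {Ω : Type*} [MeasurableSpace Ω] (P : Measure Ω)
    [IsProbabilityMeasure P] (X : Ω → ℝ) (hXm : Measurable X) (hXi : Integrable X P)
    (hna : ∀ r : ℝ, P (X ⁻¹' {r}) = 0)
    (μb : ℝ) (hD0 : 0 < P {ω | X ω < μb}) (m : ℕ) :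
    ∃ Dp : Fin (m + 1) → Set Ω,
      (∀ j, MeasurableSet (Dp j)) ∧
      (Pairwise fun i j => Disjoint (Dp i) (Dp j)) ∧
      (⋃ j, Dp j) = {ω | X ω < μb} ∧
      (∀ j, P (Dp j) = P {ω | X ω < μb} / ((m : ℝ≥0∞) + 1)) ∧
      (∀ j, (∫ ω in Dp j, X ω ∂P) = (∫ ω in {ω | X ω < μb}, X ω ∂P) / (m + 1)) :=
  exists_equal_split_general P X hXm hXi hna μb m
end

section
/- Let X be an integrable real-valued random variable on a probability space, and let x and μ_b be real numbers with P(X < x) > 0 and E[X | X < x] > μ_b. Then there is no sequence (W_n)_{n ∈ ℕ} of Borel-measurable subsets of ℝ satisfying both: (i) {ω : X(ω) < x} ⊆ {ω : X(ω) ∈ ⋃_n W_n}, and (ii) for every n such that P(X ∈ W_n \ ⋃_{j<n} W_j) > 0, E[X | X ∈ W_n \ ⋃_{j<n} W_j] ≤ μ_b. (This is the core of the impossibility result for full-visibility networks: no incentive-compatible asymptotically efficient recommendation scheme can assign to each agent n a trigger set W_n of values of V_a on which it is the first to be recommended the unexplored action b, in such a way that the trigger sets cover all values below the essential supremum x of V_b,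 while each agent's conditional expectation of V_a given its trigger event is at most μ_b = E[V_b].) -/
/-!
The first-trigger events `A n = X⁻¹' (W n \ ⋃ j < n, W j)` partition `U = X⁻¹' (⋃ n, W n)`, so
the hypotheses on the trigger events add up to `∫_U X ≤ μb · P U`. On the other hand
`U ⊇ {X < x}`, where the average of `X` exceeds `μb` (forcing `μb < x`), and on the rest of `U`
we have `X ≥ x > μb`; hence `∫_U X > μb · P U`.
-/

open MeasureTheory

theorem disjointed_eq_diff_iUnion_lt {α ι : Type*} [Preorder ι] [LocallyFiniteOrderBot ι]
    (f : ι → Set α) (i : ι) : disjointed f i = f i \ ⋃ j, ⋃ (_ : j < i), f j := by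
  simp only [disjointed_eq_inter_compl, Set.sdiff_eq, Set.compl_iUnion]

section SetIntegral

variable {Ω : Type*} [MeasurableSpace Ω] {P : Measure Ω} [IsFiniteMeasure P] {X : Ω → ℝ}
  {A B : Set Ω} {c : ℝ}

theorem mul_measureReal_lt_setIntegral_of_lt_condExpSet (hA : 0 < P A)
    (h : c < condExpSet P X A) : c * P.real A < ∫ ω in A, X ω ∂P := by
  rwa [condExpSet, lt_div_iff₀ (ENNReal.toReal_pos hA.ne' (measure_ne_top P A))] at h

theorem setIntegral_le_mul_measureReal_of_condExpSet_le (h : 0 < P A → condExpSet P X A ≤ c) :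
    ∫ ω in A, X ω ∂P ≤ c * P.real A := by
  rcases (zero_le : 0 ≤ P A).eq_or_lt with hA | hA
  · simp [Measure.restrict_eq_zero.2 hA.symm, measureReal_def, ← hA]
  · have := h hA
    rwa [condExpSet, div_le_iff₀ (ENNReal.toReal_pos hA.ne' (measure_ne_top P A))] at this

theorem lt_of_mul_measureReal_lt_setIntegral {x : ℝ} (hA : MeasurableSet A)
    (hXi : IntegrableOn X A P) (hXA : ∀ ω ∈ A, X ω ≤ x) (h : c * P.real A < ∫ ω in A, X ω ∂P) :
    c < x := by
  have hle : ∫ ω in A, X ω ∂P ≤ x * P.real A := by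
    calc ∫ ω in A, X ω ∂P ≤ ∫ _ in A, x ∂P :=
          setIntegral_mono_on hXi (integrableOn_const (measure_ne_top P A)) hA hXA
      _ = x * P.real A := by rw [setIntegral_const, smul_eq_mul, mul_comm]
  exact lt_of_mul_lt_mul_right (h.trans_le hle) measureReal_nonneg

theorem setIntegral_iUnion_le_mul_measureReal {A : ℕ → Set Ω} (hAm : ∀ n, MeasurableSet (A n))
    (hAd : Pairwise (Function.onFun Disjoint A)) (hXi : Integrable X P)
    (h : ∀ n, ∫ ω in A n, X ω ∂P ≤ c * P.real (A n)) :
    ∫ ω in ⋃ n, A n, X ω ∂P ≤ c * P.real (⋃ n, A n) := by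
  have hX := hasSum_integral_iUnion hAm hAd hXi.integrableOn
  have hc := hasSum_integral_iUnion hAm hAd (integrable_const (μ := P) c).integrableOn
  simp only [setIntegral_const, smul_eq_mul, mul_comm _ c] at hc
  exact hasSum_le h hX hc

theorem mul_measureReal_lt_setIntegral_of_subset (hBm : MeasurableSet B) (hAm : MeasurableSet A)
    (hXi : Integrable X P) (hBA : B ⊆ A) (hB : c * P.real B < ∫ ω in B, X ω ∂P)
    (hAB : ∀ ω ∈ A \ B, c ≤ X ω) : c * P.real A < ∫ ω in A, X ω ∂P := by
  have hdiff : c * P.real (A \ B) ≤ ∫ ω in A \ B, X ω ∂P :=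
    setIntegral_ge_of_const_le_real (hAm.diff hBm) (measure_ne_top P _) hAB hXi.integrableOn
  have hsplit : ∫ ω in A, X ω ∂P = (∫ ω in B, X ω ∂P) + ∫ ω in A \ B, X ω ∂P := by
    rw [← setIntegral_union Set.disjoint_sdiff_right (hAm.diff hBm) hXi.integrableOn
      hXi.integrableOn, Set.union_sdiff_cancel hBA]
  have hmeas : P.real B + P.real (A \ B) = P.real A := by
    rw [measureReal_add_sdiff hBm, Set.union_eq_right.2 hBA]
  rw [hsplit, ← hmeas, mul_add]
  exact add_lt_add_of_lt_of_le hB hdiff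

end SetIntegral

/-- the impossibility result for full-visibility networks. There is no
sequence `(W n)` of Borel trigger sets covering all values below `x` such that the
conditional expectation of `X` given each "first trigger" event is at most `μ_b`. -/
theorem no_trigger_sets {Ω : Type*} [MeasurableSpace Ω] (P : Measure Ω)
    [IsProbabilityMeasure P] (X : Ω → ℝ) (hXm : Measurable X) (hXi : Integrable X P)
    (x μb : ℝ) (hx : 0 < P {ω | X ω < x})
    (hgt : μb < condExpSet P X {ω | X ω < x}) :
    ¬ ∃ W : ℕ → Set ℝ,
      (∀ n, MeasurableSet (W n)) ∧
      ({ω | X ω < x} ⊆ {ω | X ω ∈ ⋃ n, W n}) ∧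
      (∀ n, 0 < P {ω | X ω ∈ W n \ ⋃ j, ⋃ (_ : j < n), W j} →
        condExpSet P X {ω | X ω ∈ W n \ ⋃ j, ⋃ (_ : j < n), W j} ≤ μb) := by
  rintro ⟨W, hWm, hcov, hle⟩
  simp only [← disjointed_eq_diff_iUnion_lt] at hle
  set A : ℕ → Set Ω := fun n => X ⁻¹' disjointed W n
  have hAm : ∀ n, MeasurableSet (A n) := fun n => hXm (MeasurableSet.disjointed hWm n)
  have hUm : MeasurableSet (⋃ n, A n) := MeasurableSet.iUnion hAm
  have hcovA : {ω | X ω < x} ⊆ ⋃ n, A n := by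
    rw [← Set.preimage_iUnion, iUnion_disjointed]
    exact hcov
  have hBm : MeasurableSet {ω | X ω < x} := hXm measurableSet_Iio
  have hB := mul_measureReal_lt_setIntegral_of_lt_condExpSet hx hgt
  have hμx : μb < x :=
    lt_of_mul_measureReal_lt_setIntegral hBm hXi.integrableOn (fun _ hω => le_of_lt hω) hB
  have hupper : ∫ ω in ⋃ n, A n, X ω ∂P ≤ μb * P.real (⋃ n, A n) :=
    setIntegral_iUnion_le_mul_measureReal hAm
      (fun i j hij => (disjoint_disjointed W hij).preimage X) hXi
      (fun n => setIntegral_le_mul_measureReal_of_condExpSet_le (hle n))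
  have hlower : μb * P.real (⋃ n, A n) < ∫ ω in ⋃ n, A n, X ω ∂P :=
    mul_measureReal_lt_setIntegral_of_subset hBm hUm hXi hcovA hB
      (fun _ hω => hμx.le.trans (not_lt.1 hω.2))
  exact (hupper.trans_lt hlower).false
end
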